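/- arXiv:2402.05539 — 2 statements merged into one kernel-verified Lean document; each statement's English description precedes it below -/
import Mathlib

section
/- Fix integers n ≥ 1, m ≥ 0 and 1 ≤ p ≤ n. There exist Lie algebra morphisms u : 𝔱_n → 𝔱_{n+m−1} and v : 𝔱_m → 𝔱_{n+m−1} such that: v(t_{ij}) = t_{i+p−1, j+p−1} for all i ≠ j in {1,…,m}; and for i < j in {1,…,n}, u(t_{ij}) = t_{i+m−1, j+m−1} if p < i, u(t_{ij}) = Σ_{k=i}^{i+m−1} t_{k, j+m−1} if p = i, u(t_{ij}) = t_{i, j+m−1} if i < p < j, u(t_{ij}) = Σ_{k=j}^{j+m−1} t_{i, k} if p = j, and u(t_{ij}) = t_{ij} if j < p. Moreover, the images of u and v commute: [u(a), v(b)] = 0 in 𝔱_{n+m−1} for all a ∈ 𝔱_n and all b ∈ 𝔱_m. -/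
/-! Drinfeld–Kohno Lie algebras with 1-based indexing, and operadic partial compositions. -/

open FreeLieAlgebra

variable (k : Type) [Field k] [CharZero k]

/-- Generators `t_{ij}` of the Drinfeld–Kohno Lie algebra `𝔱_n`:
pairs `(i, j)` with `1 ≤ i, j ≤ n` and `i ≠ j`. -/
def DKGen (n : ℕ) : Type :=
  {p : ℕ × ℕ // (1 ≤ p.1 ∧ p.1 ≤ n) ∧ (1 ≤ p.2 ∧ p.2 ≤ n) ∧ p.1 ≠ p.2}

/-- The generator `t_{ij}` in the free Lie algebra (junk value `0` out of range). -/
noncomputable def dkOf (n i j : ℕ) : FreeLieAlgebra k (DKGen n) :=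
  if h : (1 ≤ i ∧ i ≤ n) ∧ (1 ≤ j ∧ j ≤ n) ∧ i ≠ j then
    FreeLieAlgebra.of k (⟨(i, j), h⟩ : DKGen n) else 0

/-- The set of defining relations of the Drinfeld–Kohno Lie algebra. -/
def DKRels (n : ℕ) : Set (FreeLieAlgebra k (DKGen n)) :=
  {x | ∃ i j : ℕ, 1 ≤ i ∧ i ≤ n ∧ 1 ≤ j ∧ j ≤ n ∧ i ≠ j ∧
      x = dkOf k n i j - dkOf k n j i} ∪
  {x | ∃ i j l : ℕ, 1 ≤ i ∧ i ≤ n ∧ 1 ≤ j ∧ j ≤ n ∧ 1 ≤ l ∧ l ≤ n ∧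
      i ≠ j ∧ i ≠ l ∧ j ≠ l ∧
      x = ⁅dkOf k n i j, dkOf k n i l + dkOf k n l j⁆} ∪
  {x | ∃ i j l m : ℕ, 1 ≤ i ∧ i ≤ n ∧ 1 ≤ j ∧ j ≤ n ∧ 1 ≤ l ∧ l ≤ n ∧ 1 ≤ m ∧ m ≤ n ∧
      i ≠ j ∧ i ≠ l ∧ i ≠ m ∧ j ≠ l ∧ j ≠ m ∧ l ≠ m ∧
      x = ⁅dkOf k n i j, dkOf k n l m⁆}

/-- The Lie ideal generated by the Drinfeld–Kohno relations. -/
noncomputable def DKIdeal (n : ℕ) : LieIdeal k (FreeLieAlgebra k (DKGen n)) :=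
  LieSubmodule.lieSpan k (FreeLieAlgebra k (DKGen n)) (DKRels k n)

/-- The Drinfeld–Kohno Lie algebra `𝔱_n`. -/
noncomputable def DK (n : ℕ) : Type :=
  FreeLieAlgebra k (DKGen n) ⧸ DKIdeal k n

noncomputable instance (n : ℕ) : LieRing (DK k n) :=
  inferInstanceAs (LieRing (FreeLieAlgebra k (DKGen n) ⧸ DKIdeal k n))

noncomputable instance (n : ℕ) : LieAlgebra k (DK k n) :=
  inferInstanceAs (LieAlgebra k (FreeLieAlgebra k (DKGen n) ⧸ DKIdeal k n))

/-- The generator `t_{ij}` of the Drinfeld–Kohno Lie algebra `𝔱_n` (1-based indices). -/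
noncomputable def T (n i j : ℕ) : DK k n :=
  LieSubmodule.Quotient.mk' (DKIdeal k n) (dkOf k n i j)

/-! ### Auxiliary lemmas for the proof -/

section DKAuxiliary

lemma dk_sum_lie {N : ℕ} {α : Type*} (s : Finset α) (f : α → DK k N) (x : DK k N) :
    ⁅∑ a ∈ s, f a, x⁆ = ∑ a ∈ s, ⁅f a, x⁆ := by
  classical
  induction s using Finset.induction_on with
  | empty => simp
  | insert _ _ h ih => rw [Finset.sum_insert h, Finset.sum_insert h, add_lie, ih]

lemma dk_lie_sum {N : ℕ} {α : Type*} (s : Finset α) (f : α → DK k N) (x : DK k N) :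
    ⁅x, ∑ a ∈ s, f a⁆ = ∑ a ∈ s, ⁅x, f a⁆ := by
  classical
  induction s using Finset.induction_on with
  | empty => simp
  | insert _ _ h ih => rw [Finset.sum_insert h, Finset.sum_insert h, lie_add, ih]

lemma mk_rel_zero {N : ℕ} {x : FreeLieAlgebra k (DKGen N)} (hx : x ∈ DKRels k N) :
    LieSubmodule.Quotient.mk' (DKIdeal k N) x = 0 := by
  rw [LieSubmodule.Quotient.mk_eq_zero]
  exact LieSubmodule.subset_lieSpan hx

lemma mkDK_sub {N : ℕ} (x y : FreeLieAlgebra k (DKGen N)) :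
    (LieSubmodule.Quotient.mk' (DKIdeal k N) (x - y) : DK k N) =
      LieSubmodule.Quotient.mk' (DKIdeal k N) x -
        LieSubmodule.Quotient.mk' (DKIdeal k N) y :=
  Submodule.Quotient.mk_sub _

lemma mkDK_add {N : ℕ} (x y : FreeLieAlgebra k (DKGen N)) :
    (LieSubmodule.Quotient.mk' (DKIdeal k N) (x + y) : DK k N) =
      LieSubmodule.Quotient.mk' (DKIdeal k N) x +
        LieSubmodule.Quotient.mk' (DKIdeal k N) y :=
  Submodule.Quotient.mk_add _

lemma mk'_bracket {N : ℕ} (x y : FreeLieAlgebra k (DKGen N)) :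
    LieSubmodule.Quotient.mk' (DKIdeal k N) ⁅x, y⁆ =
      ⁅(LieSubmodule.Quotient.mk' (DKIdeal k N) x : DK k N),
        (LieSubmodule.Quotient.mk' (DKIdeal k N) y : DK k N)⁆ := rfl

lemma T_symm' {N i j : ℕ} (h1 : 1 ≤ i) (h2 : i ≤ N) (h3 : 1 ≤ j) (h4 : j ≤ N) (h5 : i ≠ j) :
    T k N i j = T k N j i := by
  rw [← sub_eq_zero]
  unfold T
  refine (mkDK_sub k (dkOf k N i j) (dkOf k N j i)).symm.trans ?_
  exact mk_rel_zero k (Or.inl (Or.inl ⟨i, j, h1, h2, h3, h4, h5, rfl⟩))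

lemma T_rel2' {N i j l : ℕ} (h1i : 1 ≤ i) (h2i : i ≤ N) (h1j : 1 ≤ j) (h2j : j ≤ N)
    (h1l : 1 ≤ l) (h2l : l ≤ N) (hij : i ≠ j) (hil : i ≠ l) (hjl : j ≠ l) :
    ⁅T k N i j, T k N i l + T k N l j⁆ = 0 := by
  unfold T
  refine (congrArg (fun z : DK k N => ⁅T k N i j, z⁆)
    (mkDK_add k (dkOf k N i l) (dkOf k N l j))).symm.trans ?_
  exact (mk'_bracket k (dkOf k N i j) (dkOf k N i l + dkOf k N l j)).symm.trans <| mk_rel_zero k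
    (Or.inl (Or.inr ⟨i, j, l, h1i, h2i, h1j, h2j, h1l, h2l, hij, hil, hjl, rfl⟩))

lemma T_rel3' {N i j l q : ℕ} (h1i : 1 ≤ i) (h2i : i ≤ N) (h1j : 1 ≤ j) (h2j : j ≤ N)
    (h1l : 1 ≤ l) (h2l : l ≤ N) (h1q : 1 ≤ q) (h2q : q ≤ N)
    (hij : i ≠ j) (hil : i ≠ l) (hiq : i ≠ q) (hjl : j ≠ l) (hjq : j ≠ q) (hlq : l ≠ q) :
    ⁅T k N i j, T k N l q⁆ = 0 := by
  unfold T
  exact (mk'_bracket k (dkOf k N i j) (dkOf k N l q)).symm.trans <| mk_rel_zero k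
    (Or.inr ⟨i, j, l, q, h1i, h2i, h1j, h2j, h1l, h2l, h1q, h2q,
      hij, hil, hiq, hjl, hjq, hlq, rfl⟩)

/-- Sum of generators over a block `A × B`. -/
noncomputable def TS (N : ℕ) (A B : Finset ℕ) : DK k N := ∑ a ∈ A, ∑ b ∈ B, T k N a b

lemma TS_lie {N : ℕ} (A B : Finset ℕ) (x : DK k N) :
    ⁅TS k N A B, x⁆ = ∑ a ∈ A, ∑ b ∈ B, ⁅T k N a b, x⁆ := by
  unfold TS
  rw [dk_sum_lie]
  exact Finset.sum_congr rfl fun a _ => dk_sum_lie k _ _ _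

lemma lie_TS {N : ℕ} (A B : Finset ℕ) (x : DK k N) :
    ⁅x, TS k N A B⁆ = ∑ a ∈ A, ∑ b ∈ B, ⁅x, T k N a b⁆ := by
  unfold TS
  rw [dk_lie_sum]
  exact Finset.sum_congr rfl fun a _ => dk_lie_sum k _ _ _

lemma TS_singleton {N : ℕ} (a b : ℕ) : TS k N {a} {b} = T k N a b := by
  simp [TS]

lemma TS_symm' {N : ℕ} {A B : Finset ℕ} (hA : ∀ a ∈ A, 1 ≤ a ∧ a ≤ N)
    (hB : ∀ b ∈ B, 1 ≤ b ∧ b ≤ N) (hAB : ∀ a ∈ A, ∀ b ∈ B, a ≠ b) :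
    TS k N A B = TS k N B A := by
  unfold TS
  rw [Finset.sum_comm]
  refine Finset.sum_congr rfl fun b hb => Finset.sum_congr rfl fun a ha => ?_
  exact T_symm' k (hA a ha).1 (hA a ha).2 (hB b hb).1 (hB b hb).2 (hAB a ha b hb)

lemma TS_rel3' {N : ℕ} {A B C D : Finset ℕ}
    (hA : ∀ a ∈ A, 1 ≤ a ∧ a ≤ N) (hB : ∀ b ∈ B, 1 ≤ b ∧ b ≤ N)
    (hC : ∀ c ∈ C, 1 ≤ c ∧ c ≤ N) (hD : ∀ d ∈ D, 1 ≤ d ∧ d ≤ N)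
    (hAB : ∀ a ∈ A, ∀ b ∈ B, a ≠ b) (hCD : ∀ c ∈ C, ∀ d ∈ D, c ≠ d)
    (hAC : ∀ a ∈ A, ∀ c ∈ C, a ≠ c) (hAD : ∀ a ∈ A, ∀ d ∈ D, a ≠ d)
    (hBC : ∀ b ∈ B, ∀ c ∈ C, b ≠ c) (hBD : ∀ b ∈ B, ∀ d ∈ D, b ≠ d) :
    ⁅TS k N A B, TS k N C D⁆ = 0 := by
  rw [TS_lie]
  refine Finset.sum_eq_zero fun a ha => Finset.sum_eq_zero fun b hb => ?_
  rw [lie_TS]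
  refine Finset.sum_eq_zero fun c hc => Finset.sum_eq_zero fun d hd => ?_
  exact T_rel3' k (hA a ha).1 (hA a ha).2 (hB b hb).1 (hB b hb).2
    (hC c hc).1 (hC c hc).2 (hD d hd).1 (hD d hd).2
    (hAB a ha b hb) (hAC a ha c hc) (hAD a ha d hd) (hBC b hb c hc) (hBD b hb d hd)
    (hCD c hc d hd)

lemma TS_rel2' {N : ℕ} {A B C : Finset ℕ}
    (hA : ∀ a ∈ A, 1 ≤ a ∧ a ≤ N) (hB : ∀ b ∈ B, 1 ≤ b ∧ b ≤ N)
    (hC : ∀ c ∈ C, 1 ≤ c ∧ c ≤ N)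
    (hAB : ∀ a ∈ A, ∀ b ∈ B, a ≠ b) (hAC : ∀ a ∈ A, ∀ c ∈ C, a ≠ c)
    (hBC : ∀ b ∈ B, ∀ c ∈ C, b ≠ c) :
    ⁅TS k N A B, TS k N A C + TS k N C B⁆ = 0 := by
  rw [TS_lie]
  refine Finset.sum_eq_zero fun a ha => Finset.sum_eq_zero fun b hb => ?_
  rw [lie_add]
  have e1 : ⁅T k N a b, TS k N A C⁆ = ∑ c ∈ C, ⁅T k N a b, T k N a c⁆ := by
    rw [lie_TS, Finset.sum_eq_single_of_mem a ha]
    intro a' ha' hne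
    refine Finset.sum_eq_zero fun c hc => ?_
    exact T_rel3' k (hA a ha).1 (hA a ha).2 (hB b hb).1 (hB b hb).2
      (hA a' ha').1 (hA a' ha').2 (hC c hc).1 (hC c hc).2
      (hAB a ha b hb) (Ne.symm hne) (hAC a ha c hc)
      (Ne.symm (hAB a' ha' b hb)) (hBC b hb c hc) (hAC a' ha' c hc)
  have e2 : ⁅T k N a b, TS k N C B⁆ = ∑ c ∈ C, ⁅T k N a b, T k N c b⁆ := by
    rw [lie_TS]
    refine Finset.sum_congr rfl fun c hc => ?_
    rw [Finset.sum_eq_single_of_mem b hb]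
    intro b' hb' hne
    exact T_rel3' k (hA a ha).1 (hA a ha).2 (hB b hb).1 (hB b hb).2
      (hC c hc).1 (hC c hc).2 (hB b' hb').1 (hB b' hb').2
      (hAB a ha b hb) (hAC a ha c hc) (hAB a ha b' hb')
      (hBC b hb c hc) (Ne.symm hne) (Ne.symm (hBC b' hb' c hc))
  rw [e1, e2, ← Finset.sum_add_distrib]
  refine Finset.sum_eq_zero fun c hc => ?_
  rw [← lie_add]
  exact T_rel2' k (hA a ha).1 (hA a ha).2 (hB b hb).1 (hB b hb).2
    (hC c hc).1 (hC c hc).2 (hAB a ha b hb) (hAC a ha c hc) (hBC b hb c hc)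

lemma TS_case1 {N : ℕ} {A : Finset ℕ} {f a' b' : ℕ} (hA : ∀ a ∈ A, 1 ≤ a ∧ a ≤ N)
    (hf1 : 1 ≤ f) (hf2 : f ≤ N) (hfA : f ∉ A) (ha' : a' ∈ A) (hb' : b' ∈ A) (hne : a' ≠ b') :
    ⁅TS k N A {f}, T k N a' b'⁆ = 0 := by
  classical
  have hfa' : f ≠ a' := fun h => hfA (by rw [h]; exact ha')
  have hfb' : f ≠ b' := fun h => hfA (by rw [h]; exact hb')
  rw [TS_lie]
  simp only [Finset.sum_singleton]
  have hb'' : b' ∈ A.erase a' := Finset.mem_erase.mpr ⟨Ne.symm hne, hb'⟩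
  rw [← Finset.add_sum_erase _ _ ha', ← Finset.add_sum_erase _ _ hb'']
  have hz : ∑ c ∈ (A.erase a').erase b', ⁅T k N c f, T k N a' b'⁆ = 0 := by
    refine Finset.sum_eq_zero fun c hc => ?_
    have hc1 := Finset.mem_erase.mp hc
    have hc2 := Finset.mem_erase.mp hc1.2
    have hcf : c ≠ f := fun h => hfA (by rw [← h]; exact hc2.2)
    exact T_rel3' k (hA c hc2.2).1 (hA c hc2.2).2 hf1 hf2
      (hA a' ha').1 (hA a' ha').2 (hA b' hb').1 (hA b' hb').2
      hcf hc2.1 hc1.1 hfa' hfb' hne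
  rw [hz, add_zero]
  rw [T_symm' k (hA b' hb').1 (hA b' hb').2 hf1 hf2 (Ne.symm hfb')]
  have h2 := T_rel2' k (hA a' ha').1 (hA a' ha').2 (hA b' hb').1 (hA b' hb').2
    hf1 hf2 hne (Ne.symm hfa') (Ne.symm hfb')
  rw [lie_add] at h2
  rw [← lie_skew (T k N a' f) (T k N a' b'), ← lie_skew (T k N f b') (T k N a' b'),
    ← neg_add, h2, neg_zero]

/-- Index shift for positions other than `p`. -/
def fsh (m p i : ℕ) : ℕ := if i < p then i else i + m - 1

/-- The block of indices replacing position `i` after inserting `m` points at position `p`. -/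
def Sset (m p i : ℕ) : Finset ℕ :=
  if i = p then Finset.Icc p (p + m - 1) else {fsh m p i}

lemma mem_Sset {m p a i : ℕ} :
    a ∈ Sset m p i ↔
      ((i < p ∧ a = i) ∨ (i = p ∧ p ≤ a ∧ a ≤ p + m - 1) ∨ (p < i ∧ a = i + m - 1)) := by
  unfold Sset fsh
  split_ifs with h1 h2 <;> simp [Finset.mem_Icc] <;> omega

lemma Sset_lt_eq {m p i : ℕ} (h : i < p) : Sset m p i = {i} := by
  unfold Sset fsh
  rw [if_neg (Nat.ne_of_lt h), if_pos h]

lemma Sset_gt_eq {m p i : ℕ} (h : p < i) : Sset m p i = {i + m - 1} := by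
  unfold Sset fsh
  rw [if_neg (Nat.ne_of_gt h), if_neg (Nat.not_lt.mpr (Nat.le_of_lt h))]

lemma Sset_eq_eq {m p : ℕ} : Sset m p p = Finset.Icc p (p + m - 1) := by
  unfold Sset
  rw [if_pos rfl]

/-- Every element of a free Lie algebra lies in the Lie span of the generators. -/
lemma free_mem_lieSpan {X : Type} (x : FreeLieAlgebra k X) :
    x ∈ LieSubalgebra.lieSpan k (FreeLieAlgebra k X) (Set.range (FreeLieAlgebra.of k)) := by
  set K := LieSubalgebra.lieSpan k (FreeLieAlgebra k X) (Set.range (FreeLieAlgebra.of k)) with hK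
  let F : FreeLieAlgebra k X →ₗ⁅k⁆ K :=
    FreeLieAlgebra.lift k fun y => ⟨FreeLieAlgebra.of k y, LieSubalgebra.subset_lieSpan ⟨y, rfl⟩⟩
  have heq : K.incl.comp F = LieHom.id := by
    apply FreeLieAlgebra.hom_ext
    intro y
    show (K.incl) (F (FreeLieAlgebra.of k y)) = FreeLieAlgebra.of k y
    rw [show F (FreeLieAlgebra.of k y) =
      ⟨FreeLieAlgebra.of k y, LieSubalgebra.subset_lieSpan ⟨y, rfl⟩⟩ from
      FreeLieAlgebra.lift_of_apply _ _]
    rfl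
  have hx : K.incl (F x) = x := by
    have := DFunLike.congr_fun heq x
    simpa using this
  rw [← hx]
  exact (F x).2

/-- Lift a morphism out of the free Lie algebra killing the relations to the quotient. -/
noncomputable def DKlift {n N : ℕ} (f : FreeLieAlgebra k (DKGen n) →ₗ⁅k⁆ DK k N)
    (hf : ∀ x ∈ DKRels k n, f x = 0) : DK k n →ₗ⁅k⁆ DK k N :=
  have hker : ∀ x ∈ DKIdeal k n, f x = 0 := fun x hx =>
    LieHom.mem_ker.mp
      ((LieSubmodule.lieSpan_le.mpr fun y hy => LieHom.mem_ker.mpr (hf y hy)) hx)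
  { (Submodule.liftQ ((DKIdeal k n) : Submodule k (FreeLieAlgebra k (DKGen n)))
      (f : FreeLieAlgebra k (DKGen n) →ₗ[k] DK k N) fun x hx => hker x hx :
      DK k n →ₗ[k] DK k N) with
    map_lie' := by
      rintro ⟨x⟩ ⟨y⟩
      exact f.map_lie x y }

lemma DKlift_mk {n N : ℕ} (f : FreeLieAlgebra k (DKGen n) →ₗ⁅k⁆ DK k N)
    (hf : ∀ x ∈ DKRels k n, f x = 0) (x : FreeLieAlgebra k (DKGen n)) :
    DKlift k f hf (LieSubmodule.Quotient.mk' (DKIdeal k n) x) = f x := rfl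

end DKAuxiliary


/-- Fix `n ≥ 1`, `m ≥ 0` and `1 ≤ p ≤ n`.  There exist Lie algebra
morphisms `u : 𝔱_n → 𝔱_{n+m−1}` ("coproduct type") and `v : 𝔱_m → 𝔱_{n+m−1}` ("insertion
type") given on generators by the formulas of Proposition 2.14, and their images commute. -/
theorem dk_partial_composition (n m p : ℕ) (hn : 1 ≤ n) (hp1 : 1 ≤ p) (hpn : p ≤ n) :
    ∃ (u : DK k n →ₗ⁅k⁆ DK k (n + m - 1)) (v : DK k m →ₗ⁅k⁆ DK k (n + m - 1)),
      (∀ i j : ℕ, 1 ≤ i → i ≤ m → 1 ≤ j → j ≤ m → i ≠ j →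
        v (T k m i j) = T k (n + m - 1) (i + p - 1) (j + p - 1)) ∧
      (∀ i j : ℕ, 1 ≤ i → i < j → j ≤ n →
        (p < i → u (T k n i j) = T k (n + m - 1) (i + m - 1) (j + m - 1)) ∧
        (p = i → u (T k n i j) =
          ∑ l ∈ Finset.Icc i (i + m - 1), T k (n + m - 1) l (j + m - 1)) ∧
        (i < p → p < j → u (T k n i j) = T k (n + m - 1) i (j + m - 1)) ∧
        (p = j → u (T k n i j) =
          ∑ l ∈ Finset.Icc j (j + m - 1), T k (n + m - 1) i l) ∧
        (j < p → u (T k n i j) = T k (n + m - 1) i j)) ∧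
      (∀ (a : DK k n) (b : DK k m), ⁅u a, v b⁆ = 0) := by
    classical
  have hmemS : ∀ a i : ℕ, a ∈ Sset m p i ↔
      ((i < p ∧ a = i) ∨ (i = p ∧ p ≤ a ∧ a ≤ p + m - 1) ∨ (p < i ∧ a = i + m - 1)) :=
    fun a i => mem_Sset
  have hSok : ∀ i, 1 ≤ i → i ≤ n → ∀ a ∈ Sset m p i, 1 ≤ a ∧ a ≤ n + m - 1 := by
    intro i hi1 hi2 a ha
    rw [hmemS] at ha
    omega
  have hSdisj : ∀ i j : ℕ, i ≠ j → ∀ a ∈ Sset m p i, ∀ b ∈ Sset m p j, a ≠ b := by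
    intro i j hij a ha b hb
    rw [hmemS] at ha hb
    omega
  set uGen : DKGen n → DK k (n + m - 1) :=
    fun g => TS k (n + m - 1) (Sset m p g.1.1) (Sset m p g.1.2) with huGen
  set vGen : DKGen m → DK k (n + m - 1) :=
    fun g => T k (n + m - 1) (g.1.1 + p - 1) (g.1.2 + p - 1) with hvGen
  set U : FreeLieAlgebra k (DKGen n) →ₗ⁅k⁆ DK k (n + m - 1) :=
    FreeLieAlgebra.lift k uGen with hU
  set V : FreeLieAlgebra k (DKGen m) →ₗ⁅k⁆ DK k (n + m - 1) :=
    FreeLieAlgebra.lift k vGen with hV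
  have hUdk : ∀ i j : ℕ, ∀ h : (1 ≤ i ∧ i ≤ n) ∧ (1 ≤ j ∧ j ≤ n) ∧ i ≠ j,
      U (dkOf k n i j) = TS k (n + m - 1) (Sset m p i) (Sset m p j) := by
    intro i j h
    unfold dkOf
    rw [dif_pos h, hU]
    exact FreeLieAlgebra.lift_of_apply uGen _
  have hVdk : ∀ i j : ℕ, ∀ h : (1 ≤ i ∧ i ≤ m) ∧ (1 ≤ j ∧ j ≤ m) ∧ i ≠ j,
      V (dkOf k m i j) = T k (n + m - 1) (i + p - 1) (j + p - 1) := by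
    intro i j h
    unfold dkOf
    rw [dif_pos h, hV]
    exact FreeLieAlgebra.lift_of_apply vGen _
  have hUker : ∀ x ∈ DKRels k n, U x = 0 := by
    rintro x
      ((⟨i, j, h1, h2, h3, h4, h5, rfl⟩ |
        ⟨i, j, l, h1, h2, h3, h4, h5, h6, h7, h8, h9, rfl⟩) |
        ⟨i, j, l, q, h1, h2, h3, h4, h5, h6, h7, h8, h9, h10, h11, h12, h13, h14, rfl⟩)
    · rw [map_sub, hUdk i j ⟨⟨h1, h2⟩, ⟨h3, h4⟩, h5⟩,
        hUdk j i ⟨⟨h3, h4⟩, ⟨h1, h2⟩, Ne.symm h5⟩,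
        TS_symm' k (hSok i h1 h2) (hSok j h3 h4) (hSdisj i j h5), sub_self]
    · rw [LieHom.map_lie, map_add, hUdk i j ⟨⟨h1, h2⟩, ⟨h3, h4⟩, h7⟩,
        hUdk i l ⟨⟨h1, h2⟩, ⟨h5, h6⟩, h8⟩, hUdk l j ⟨⟨h5, h6⟩, ⟨h3, h4⟩, Ne.symm h9⟩]
      exact TS_rel2' k (hSok i h1 h2) (hSok j h3 h4) (hSok l h5 h6)
        (hSdisj i j h7) (hSdisj i l h8) (hSdisj j l h9)
    · rw [LieHom.map_lie, hUdk i j ⟨⟨h1, h2⟩, ⟨h3, h4⟩, h9⟩,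
        hUdk l q ⟨⟨h5, h6⟩, ⟨h7, h8⟩, h14⟩]
      exact TS_rel3' k (hSok i h1 h2) (hSok j h3 h4) (hSok l h5 h6) (hSok q h7 h8)
        (hSdisj i j h9) (hSdisj l q h14) (hSdisj i l h10) (hSdisj i q h11)
        (hSdisj j l h12) (hSdisj j q h13)
  have hVker : ∀ x ∈ DKRels k m, V x = 0 := by
    rintro x
      ((⟨i, j, h1, h2, h3, h4, h5, rfl⟩ |
        ⟨i, j, l, h1, h2, h3, h4, h5, h6, h7, h8, h9, rfl⟩) |
        ⟨i, j, l, q, h1, h2, h3, h4, h5, h6, h7, h8, h9, h10, h11, h12, h13, h14, rfl⟩)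
    · rw [map_sub, hVdk i j ⟨⟨h1, h2⟩, ⟨h3, h4⟩, h5⟩,
        hVdk j i ⟨⟨h3, h4⟩, ⟨h1, h2⟩, Ne.symm h5⟩,
        T_symm' k (by omega) (by omega) (by omega) (by omega) (by omega), sub_self]
    · rw [LieHom.map_lie, map_add, hVdk i j ⟨⟨h1, h2⟩, ⟨h3, h4⟩, h7⟩,
        hVdk i l ⟨⟨h1, h2⟩, ⟨h5, h6⟩, h8⟩, hVdk l j ⟨⟨h5, h6⟩, ⟨h3, h4⟩, Ne.symm h9⟩]
      exact T_rel2' k (by omega) (by omega) (by omega) (by omega) (by omega) (by omega)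
        (by omega) (by omega) (by omega)
    · rw [LieHom.map_lie, hVdk i j ⟨⟨h1, h2⟩, ⟨h3, h4⟩, h9⟩,
        hVdk l q ⟨⟨h5, h6⟩, ⟨h7, h8⟩, h14⟩]
      exact T_rel3' k (by omega) (by omega) (by omega) (by omega) (by omega) (by omega)
        (by omega) (by omega) (by omega) (by omega) (by omega) (by omega) (by omega)
        (by omega)
  refine ⟨DKlift k U hUker, DKlift k V hVker, ?_, ?_, ?_⟩
  · -- the formula for v
    intro i j hi1 hi2 hj1 hj2 hij
    have h : (1 ≤ i ∧ i ≤ m) ∧ (1 ≤ j ∧ j ≤ m) ∧ i ≠ j := ⟨⟨hi1, hi2⟩, ⟨hj1, hj2⟩, hij⟩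
    calc DKlift k V hVker (T k m i j) = V (dkOf k m i j) := rfl
      _ = T k (n + m - 1) (i + p - 1) (j + p - 1) := hVdk i j h
  · -- the formulas for u
    intro i j hi1 hij hjn
    have h : (1 ≤ i ∧ i ≤ n) ∧ (1 ≤ j ∧ j ≤ n) ∧ i ≠ j := by
      refine ⟨⟨hi1, by omega⟩, ⟨by omega, hjn⟩, by omega⟩
    have hu : DKlift k U hUker (T k n i j) = TS k (n + m - 1) (Sset m p i) (Sset m p j) :=
      hUdk i j h
    refine ⟨?_, ?_, ?_, ?_, ?_⟩
    · intro hpi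
      rw [hu, Sset_gt_eq hpi, Sset_gt_eq (lt_trans hpi hij), TS_singleton]
    · intro hpi
      have hsi : Sset m p i = Finset.Icc i (i + m - 1) := by
        rw [← hpi]
        exact Sset_eq_eq
      rw [hu, hsi, Sset_gt_eq (show p < j by omega)]
      simp [TS]
    · intro hip hpj
      rw [hu, Sset_lt_eq hip, Sset_gt_eq hpj, TS_singleton]
    · intro hpj
      have hsj : Sset m p j = Finset.Icc j (j + m - 1) := by
        rw [← hpj]
        exact Sset_eq_eq
      rw [hu, hsj, Sset_lt_eq (show i < p by omega)]
      simp [TS]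
    · intro hjp
      rw [hu, Sset_lt_eq (show i < p by omega), Sset_lt_eq hjp, TS_singleton]
  · -- commutation of the images
    have hgen : ∀ (g : DKGen n) (h : DKGen m),
        ⁅U (FreeLieAlgebra.of k g), V (FreeLieAlgebra.of k h)⁆ = 0 := by
      rintro ⟨⟨i, j⟩, hg⟩ ⟨⟨a, b⟩, hh⟩
      obtain ⟨⟨hi1, hi2⟩, ⟨hj1, hj2⟩, hij⟩ := hg
      obtain ⟨⟨ha1, ha2⟩, ⟨hb1, hb2⟩, hab⟩ := hh
      rw [hU, hV]
      erw [FreeLieAlgebra.lift_of_apply uGen, FreeLieAlgebra.lift_of_apply vGen]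
      rw [huGen, hvGen]
      simp only
      have hvT : 1 ≤ a + p - 1 ∧ a + p - 1 ≤ n + m - 1 := by omega
      have hwT : 1 ≤ b + p - 1 ∧ b + p - 1 ≤ n + m - 1 := by omega
      have hab' : a + p - 1 ≠ b + p - 1 := by omega
      have hmemA : ∀ c : ℕ, 1 ≤ c → c ≤ m → c + p - 1 ∈ Sset m p p := by
        intro c hc1 hc2
        rw [hmemS]
        omega
      by_cases hip : i = p
      · have hjp : j ≠ p := by omega
        have hsub : Sset m p j = {fsh m p j} := by
          unfold Sset
          rw [if_neg hjp]
        have hfj := hSok j hj1 hj2 (fsh m p j) (by rw [hsub]; exact Finset.mem_singleton_self _)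
        rw [hip, hsub]
        refine TS_case1 k (hSok p hp1 hpn) hfj.1 hfj.2 ?_ (hmemA a ha1 ha2) (hmemA b hb1 hb2) hab'
        · intro hmem
          exact hSdisj j p hjp (fsh m p j) (by rw [hsub]; exact Finset.mem_singleton_self _)
            (fsh m p j) hmem rfl
      · by_cases hjp : j = p
        · have hsub : Sset m p i = {fsh m p i} := by
            unfold Sset
            rw [if_neg hip]
          have hfi := hSok i hi1 hi2 (fsh m p i) (by rw [hsub]; exact Finset.mem_singleton_self _)
          rw [TS_symm' k (hSok i hi1 hi2) (hSok j hj1 hj2) (hSdisj i j hij), hjp, hsub]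
          refine TS_case1 k (hSok p hp1 hpn) hfi.1 hfi.2 ?_ (hmemA a ha1 ha2) (hmemA b hb1 hb2)
            hab'
          · intro hmem
            exact hSdisj i p hip (fsh m p i) (by rw [hsub]; exact Finset.mem_singleton_self _)
              (fsh m p i) hmem rfl
        · rw [show T k (n + m - 1) (a + p - 1) (b + p - 1) =
            TS k (n + m - 1) {a + p - 1} {b + p - 1} from (TS_singleton k _ _).symm]
          have hone : ∀ c : ℕ, 1 ≤ c → c ≤ m →
              ∀ x ∈ ({c + p - 1} : Finset ℕ), 1 ≤ x ∧ x ≤ n + m - 1 := by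
            intro c hc1 hc2 x hx
            rw [Finset.mem_singleton] at hx
            omega
          have hd : ∀ c : ℕ, 1 ≤ c → c ≤ m → ∀ l : ℕ, l ≠ p →
              ∀ x ∈ Sset m p l, ∀ y ∈ ({c + p - 1} : Finset ℕ), x ≠ y := by
            intro c hc1 hc2 l hlp x hx y hy
            rw [Finset.mem_singleton] at hy
            rw [hmemS] at hx
            omega
          refine TS_rel3' k (hSok i hi1 hi2) (hSok j hj1 hj2) (hone a ha1 ha2) (hone b hb1 hb2)
            (hSdisj i j hij) ?_ (hd a ha1 ha2 i hip) (hd b hb1 hb2 i hip)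
            (hd a ha1 ha2 j hjp) (hd b hb1 hb2 j hjp)
          intro x hx y hy
          rw [Finset.mem_singleton] at hx hy
          omega
    have inner : ∀ c : DK k (n + m - 1),
        (∀ h : DKGen m, ⁅c, V (FreeLieAlgebra.of k h)⁆ = 0) →
        ∀ y : FreeLieAlgebra k (DKGen m), ⁅c, V y⁆ = 0 := by
      intro c hc y
      refine LieSubalgebra.lieSpan_induction k (p := fun y _ => ⁅c, V y⁆ = 0)
        (hx := free_mem_lieSpan k y) ?_ ?_ ?_ ?_ ?_
      · rintro _ ⟨h, rfl⟩
        exact hc h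
      · show ⁅c, V 0⁆ = 0
        rw [map_zero, lie_zero]
      · intro z w _ _ hz hw
        show ⁅c, V (z + w)⁆ = 0
        rw [map_add, lie_add, hz, hw, add_zero]
      · intro r z _ hz
        show ⁅c, V (r • z)⁆ = 0
        rw [map_smul, lie_smul, hz, smul_zero]
      · intro z w _ _ hz hw
        show ⁅c, V ⁅z, w⁆⁆ = 0
        rw [LieHom.map_lie, leibniz_lie, hz, hw, zero_lie, lie_zero, add_zero]
    have key : ∀ (x : FreeLieAlgebra k (DKGen n)) (y : FreeLieAlgebra k (DKGen m)),
        ⁅U x, V y⁆ = 0 := by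
      intro x
      refine LieSubalgebra.lieSpan_induction k (p := fun x _ => ∀ y, ⁅U x, V y⁆ = 0)
        (hx := free_mem_lieSpan k x) ?_ ?_ ?_ ?_ ?_
      · rintro _ ⟨g, rfl⟩
        exact inner _ fun h => hgen g h
      · intro y
        show ⁅U 0, V y⁆ = 0
        rw [map_zero, zero_lie]
      · intro z w _ _ hz hw y
        show ⁅U (z + w), V y⁆ = 0
        rw [map_add, add_lie, hz, hw, add_zero]
      · intro r z _ hz y
        show ⁅U (r • z), V y⁆ = 0
        rw [map_smul, smul_lie, hz, smul_zero]
      · intro z w _ _ hz hw y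
        show ⁅U ⁅z, w⁆, V y⁆ = 0
        rw [LieHom.map_lie, lie_lie, hz, hw, lie_zero, lie_zero, sub_self]
    intro a b
    obtain ⟨x, rfl⟩ := LieSubmodule.Quotient.surjective_mk' (DKIdeal k n) a
    obtain ⟨y, rfl⟩ := LieSubmodule.Quotient.surjective_mk' (DKIdeal k m) b
    rw [DKlift_mk, DKlift_mk]
    exact key x y
end

section
/- Fix integers n ≥ 1, m ≥ 0 and 1 ≤ p ≤ n. There exist Lie algebra morphisms u : 𝔱_n^{ell} → 𝔱_{n+m−1}^{ell} and v : 𝔱_m → 𝔱_{n+m−1}^{ell} such that: v(t_{ij}) = t_{i+p−1, j+p−1} for all i ≠ j in {1,…,m}; for i < j in {1,…,n}, u(t_{ij}) = t_{i+m−1, j+m−1} if p < i, u(t_{ij}) = Σ_{k=i}^{i+m−1} t_{k, j+m−1} if p = i, u(t_{ij}) = t_{i, j+m−1} if i < p < j, u(t_{ij}) = Σ_{k=j}^{j+m−1} t_{i, k} if p = j, and u(t_{ij}) = t_{ij} if j < p; u(α_i) = α_{i+m−1} if p < i, u(α_i) = Σ_{k=i}^{i+m−1} α_k if p = i, and u(α_i)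 = α_i if i < p; and the same formulas for u(β_i) with β in place of α. Moreover, the images of u and v commute: [u(a), v(b)] = 0 in 𝔱_{n+m−1}^{ell} for all a ∈ 𝔱_n^{ell} and all b ∈ 𝔱_m. -/
/-! The elliptic Drinfeld–Kohno Lie algebras `𝔱_n^{ell}` (Definition 4.4),
with 1-based indexing. -/

open FreeLieAlgebra

variable (k : Type) [Field k] [CharZero k]

/-- Generators of `𝔱_n^{ell}`: the `t_{ij}` (`1 ≤ i, j ≤ n`, `i ≠ j`),
the `α_i` and the `β_i` (`1 ≤ i ≤ n`). -/
def EGen (n : ℕ) : Type :=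
  {p : ℕ × ℕ // (1 ≤ p.1 ∧ p.1 ≤ n) ∧ (1 ≤ p.2 ∧ p.2 ≤ n) ∧ p.1 ≠ p.2} ⊕
    {i : ℕ // 1 ≤ i ∧ i ≤ n} ⊕ {i : ℕ // 1 ≤ i ∧ i ≤ n}

/-- The generator `t_{ij}` in the free Lie algebra (junk value `0` out of range). -/
noncomputable def eT (n i j : ℕ) : FreeLieAlgebra k (EGen n) :=
  if h : (1 ≤ i ∧ i ≤ n) ∧ (1 ≤ j ∧ j ≤ n) ∧ i ≠ j then
    FreeLieAlgebra.of k (Sum.inl ⟨(i, j), h⟩ : EGen n) else 0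

/-- The generator `α_i` in the free Lie algebra (junk value `0` out of range). -/
noncomputable def eA (n i : ℕ) : FreeLieAlgebra k (EGen n) :=
  if h : 1 ≤ i ∧ i ≤ n then
    FreeLieAlgebra.of k (Sum.inr (Sum.inl ⟨i, h⟩) : EGen n) else 0

/-- The generator `β_i` in the free Lie algebra (junk value `0` out of range). -/
noncomputable def eB (n i : ℕ) : FreeLieAlgebra k (EGen n) :=
  if h : 1 ≤ i ∧ i ≤ n then
    FreeLieAlgebra.of k (Sum.inr (Sum.inr ⟨i, h⟩) : EGen n) else 0

/-- The set of defining relations of the elliptic Drinfeld–Kohno Lie algebra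
(Definition 4.4). -/
def ERels (n : ℕ) : Set (FreeLieAlgebra k (EGen n)) :=
  -- (a) t_{ij} = t_{ji}
  {x | ∃ i j : ℕ, 1 ≤ i ∧ i ≤ n ∧ 1 ≤ j ∧ j ≤ n ∧ i ≠ j ∧
      x = eT k n i j - eT k n j i} ∪
  -- (b) [t_{ij}, t_{kl}] = 0 for pairwise distinct i, j, l, m
  {x | ∃ i j l m : ℕ, 1 ≤ i ∧ i ≤ n ∧ 1 ≤ j ∧ j ≤ n ∧ 1 ≤ l ∧ l ≤ n ∧ 1 ≤ m ∧ m ≤ n ∧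
      i ≠ j ∧ i ≠ l ∧ i ≠ m ∧ j ≠ l ∧ j ≠ m ∧ l ≠ m ∧
      x = ⁅eT k n i j, eT k n l m⁆} ∪
  -- (c) [t_{ij}, t_{ik} + t_{jk}] = 0 for pairwise distinct i, j, l
  {x | ∃ i j l : ℕ, 1 ≤ i ∧ i ≤ n ∧ 1 ≤ j ∧ j ≤ n ∧ 1 ≤ l ∧ l ≤ n ∧
      i ≠ j ∧ i ≠ l ∧ j ≠ l ∧
      x = ⁅eT k n i j, eT k n i l + eT k n j l⁆} ∪
  -- (d) [α_i, β_j] = t_{ij} for i ≠ j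
  {x | ∃ i j : ℕ, 1 ≤ i ∧ i ≤ n ∧ 1 ≤ j ∧ j ≤ n ∧ i ≠ j ∧
      x = ⁅eA k n i, eB k n j⁆ - eT k n i j} ∪
  -- (e) [α_i, α_j] = [β_i, β_j] = 0 for i ≠ j
  {x | ∃ i j : ℕ, 1 ≤ i ∧ i ≤ n ∧ 1 ≤ j ∧ j ≤ n ∧ i ≠ j ∧
      (x = ⁅eA k n i, eA k n j⁆ ∨ x = ⁅eB k n i, eB k n j⁆)} ∪
  -- (f) [α_i, β_i] = −Σ_{j ≠ i} t_{ij}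
  {x | ∃ i : ℕ, 1 ≤ i ∧ i ≤ n ∧
      x = ⁅eA k n i, eB k n i⁆ + ∑ j ∈ (Finset.Icc 1 n).erase i, eT k n i j} ∪
  -- (g) [α_i, t_{jk}] = [β_i, t_{jk}] = 0 for pairwise distinct i, j, l
  {x | ∃ i j l : ℕ, 1 ≤ i ∧ i ≤ n ∧ 1 ≤ j ∧ j ≤ n ∧ 1 ≤ l ∧ l ≤ n ∧
      i ≠ j ∧ i ≠ l ∧ j ≠ l ∧
      (x = ⁅eA k n i, eT k n j l⁆ ∨ x = ⁅eB k n i, eT k n j l⁆)} ∪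
  -- (h) [α_i + α_j, t_{ij}] = [β_i + β_j, t_{ij}] = 0 for i ≠ j
  {x | ∃ i j : ℕ, 1 ≤ i ∧ i ≤ n ∧ 1 ≤ j ∧ j ≤ n ∧ i ≠ j ∧
      (x = ⁅eA k n i + eA k n j, eT k n i j⁆ ∨ x = ⁅eB k n i + eB k n j, eT k n i j⁆)}

/-- The Lie ideal generated by the elliptic Drinfeld–Kohno relations. -/
noncomputable def EIdeal (n : ℕ) : LieIdeal k (FreeLieAlgebra k (EGen n)) :=
  LieSubmodule.lieSpan k (FreeLieAlgebra k (EGen n)) (ERels k n)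

/-- The elliptic Drinfeld–Kohno Lie algebra `𝔱_n^{ell}`. -/
noncomputable def Ell (n : ℕ) : Type :=
  FreeLieAlgebra k (EGen n) ⧸ EIdeal k n

noncomputable instance (n : ℕ) : LieRing (Ell k n) :=
  inferInstanceAs (LieRing (FreeLieAlgebra k (EGen n) ⧸ EIdeal k n))

noncomputable instance (n : ℕ) : LieAlgebra k (Ell k n) :=
  inferInstanceAs (LieAlgebra k (FreeLieAlgebra k (EGen n) ⧸ EIdeal k n))

/-- The generator `t_{ij}` of `𝔱_n^{ell}` (1-based indices). -/
noncomputable def ET (n i j : ℕ) : Ell k n :=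
  LieSubmodule.Quotient.mk' (EIdeal k n) (eT k n i j)

/-- The generator `α_i` of `𝔱_n^{ell}` (1-based index). -/
noncomputable def EA (n i : ℕ) : Ell k n :=
  LieSubmodule.Quotient.mk' (EIdeal k n) (eA k n i)

/-- The generator `β_i` of `𝔱_n^{ell}` (1-based index). -/
noncomputable def EB (n i : ℕ) : Ell k n :=
  LieSubmodule.Quotient.mk' (EIdeal k n) (eB k n i)
open FreeLieAlgebra

variable (k : Type) [Field k] [CharZero k]

namespace Stmt18

open Finset
set_option linter.unusedSectionVars false

variable {k : Type} [Field k] [CharZero k] {N : ℕ}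

lemma emk_lie (x y : FreeLieAlgebra k (EGen N)) :
    LieSubmodule.Quotient.mk' (EIdeal k N) ⁅x, y⁆ =
      ⁅(LieSubmodule.Quotient.mk' (EIdeal k N) x : Ell k N),
        LieSubmodule.Quotient.mk' (EIdeal k N) y⁆ := rfl

lemma emk_zero_of_rel {x : FreeLieAlgebra k (EGen N)} (h : x ∈ ERels k N) :
    LieSubmodule.Quotient.mk' (EIdeal k N) x = 0 :=
  (LieSubmodule.Quotient.mk_eq_zero _).2 (LieSubmodule.subset_lieSpan h)



lemma lie_sum {L : Type} [LieRing L] {ι : Type} (x : L) (s : Finset ι)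
    (f : ι → L) : ⁅x, ∑ i ∈ s, f i⁆ = ∑ i ∈ s, ⁅x, f i⁆ := by
  induction s using Finset.cons_induction with
  | empty => simp
  | cons a s ha ih => simp [Finset.sum_cons, ih, lie_add]

lemma sum_lie {L : Type} [LieRing L] {ι : Type} (x : L) (s : Finset ι)
    (f : ι → L) : ⁅∑ i ∈ s, f i, x⁆ = ∑ i ∈ s, ⁅f i, x⁆ := by
  induction s using Finset.cons_induction with
  | empty => simp
  | cons a s ha ih => simp [Finset.sum_cons, ih, add_lie]

lemma lieHom_sum {L M : Type} [LieRing L] [LieAlgebra k L] [LieRing M] [LieAlgebra k M]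
    (f : L →ₗ⁅k⁆ M) {ι : Type} (s : Finset ι) (g : ι → L) :
    f (∑ i ∈ s, g i) = ∑ i ∈ s, f (g i) := by
  induction s using Finset.cons_induction with
  | empty => simp
  | cons a s ha ih => rw [Finset.sum_cons, Finset.sum_cons, map_add, ih]

lemma emk_sum {ι : Type} (s : Finset ι) (f : ι → FreeLieAlgebra k (EGen N)) :
    LieSubmodule.Quotient.mk' (EIdeal k N) (∑ i ∈ s, f i) =
      ∑ i ∈ s, LieSubmodule.Quotient.mk' (EIdeal k N) (f i) := by
  induction s using Finset.cons_induction with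
  | empty => simp
  | cons a s ha ih => rw [Finset.sum_cons, Finset.sum_cons, map_add, ih]

section Rels
variable {i j l m : ℕ}

lemma ET_symm (hi : i ∈ Icc 1 N) (hj : j ∈ Icc 1 N) (hij : i ≠ j) :
    ET k N i j = ET k N j i := by
  rw [Finset.mem_Icc] at hi hj
  have h : eT k N i j - eT k N j i ∈ ERels k N := by
    simp only [ERels, Set.mem_union, Set.mem_setOf_eq]
    exact Or.inl <| Or.inl <| Or.inl <| Or.inl <| Or.inl <| Or.inl <| Or.inl
      ⟨i, j, hi.1, hi.2, hj.1, hj.2, hij, rfl⟩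
  have h0 := emk_zero_of_rel h
  rw [map_sub, sub_eq_zero] at h0
  exact h0

lemma lie_ET_ET (hi : i ∈ Icc 1 N) (hj : j ∈ Icc 1 N) (hl : l ∈ Icc 1 N)
    (hm : m ∈ Icc 1 N) (hij : i ≠ j) (hil : i ≠ l) (him : i ≠ m) (hjl : j ≠ l)
    (hjm : j ≠ m) (hlm : l ≠ m) : ⁅ET k N i j, ET k N l m⁆ = 0 := by
  rw [Finset.mem_Icc] at hi hj hl hm
  have h : ⁅eT k N i j, eT k N l m⁆ ∈ ERels k N := by
    simp only [ERels, Set.mem_union, Set.mem_setOf_eq]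
    exact Or.inl <| Or.inl <| Or.inl <| Or.inl <| Or.inl <| Or.inl <| Or.inr
      ⟨i, j, l, m, hi.1, hi.2, hj.1, hj.2, hl.1, hl.2, hm.1, hm.2,
        hij, hil, him, hjl, hjm, hlm, rfl⟩
  have h0 := emk_zero_of_rel h
  rw [emk_lie] at h0
  exact h0

lemma lie_ET_braid (hi : i ∈ Icc 1 N) (hj : j ∈ Icc 1 N) (hl : l ∈ Icc 1 N)
    (hij : i ≠ j) (hil : i ≠ l) (hjl : j ≠ l) :
    ⁅ET k N i j, ET k N i l + ET k N j l⁆ = 0 := by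
  rw [Finset.mem_Icc] at hi hj hl
  have h : ⁅eT k N i j, eT k N i l + eT k N j l⁆ ∈ ERels k N := by
    simp only [ERels, Set.mem_union, Set.mem_setOf_eq]
    exact Or.inl <| Or.inl <| Or.inl <| Or.inl <| Or.inl <| Or.inr
      ⟨i, j, l, hi.1, hi.2, hj.1, hj.2, hl.1, hl.2, hij, hil, hjl, rfl⟩
  have h0 := emk_zero_of_rel h
  rw [emk_lie, map_add] at h0
  exact h0

lemma lie_EA_EB (hi : i ∈ Icc 1 N) (hj : j ∈ Icc 1 N) (hij : i ≠ j) :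
    ⁅EA k N i, EB k N j⁆ = ET k N i j := by
  rw [Finset.mem_Icc] at hi hj
  have h : ⁅eA k N i, eB k N j⁆ - eT k N i j ∈ ERels k N := by
    simp only [ERels, Set.mem_union, Set.mem_setOf_eq]
    exact Or.inl <| Or.inl <| Or.inl <| Or.inl <| Or.inr
      ⟨i, j, hi.1, hi.2, hj.1, hj.2, hij, rfl⟩
  have h0 := emk_zero_of_rel h
  rw [map_sub, emk_lie, sub_eq_zero] at h0
  exact h0

lemma lie_EA_EA (hi : i ∈ Icc 1 N) (hj : j ∈ Icc 1 N) (hij : i ≠ j) :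
    ⁅EA k N i, EA k N j⁆ = 0 := by
  rw [Finset.mem_Icc] at hi hj
  have h : ⁅eA k N i, eA k N j⁆ ∈ ERels k N := by
    simp only [ERels, Set.mem_union, Set.mem_setOf_eq]
    exact Or.inl <| Or.inl <| Or.inl <| Or.inr
      ⟨i, j, hi.1, hi.2, hj.1, hj.2, hij, Or.inl rfl⟩
  have h0 := emk_zero_of_rel h
  rw [emk_lie] at h0
  exact h0

lemma lie_EB_EB (hi : i ∈ Icc 1 N) (hj : j ∈ Icc 1 N) (hij : i ≠ j) :
    ⁅EB k N i, EB k N j⁆ = 0 := by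
  rw [Finset.mem_Icc] at hi hj
  have h : ⁅eB k N i, eB k N j⁆ ∈ ERels k N := by
    simp only [ERels, Set.mem_union, Set.mem_setOf_eq]
    exact Or.inl <| Or.inl <| Or.inl <| Or.inr
      ⟨i, j, hi.1, hi.2, hj.1, hj.2, hij, Or.inr rfl⟩
  have h0 := emk_zero_of_rel h
  rw [emk_lie] at h0
  exact h0

lemma lie_EA_EB_diag (hi : i ∈ Icc 1 N) :
    ⁅EA k N i, EB k N i⁆ = -∑ j ∈ (Icc 1 N).erase i, ET k N i j := by
  rw [Finset.mem_Icc] at hi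
  have h : ⁅eA k N i, eB k N i⁆ + ∑ j ∈ (Finset.Icc 1 N).erase i, eT k N i j ∈ ERels k N := by
    simp only [ERels, Set.mem_union, Set.mem_setOf_eq]
    exact Or.inl <| Or.inl <| Or.inr ⟨i, hi.1, hi.2, rfl⟩
  have h0 := emk_zero_of_rel h
  rw [map_add, emk_lie, emk_sum, add_eq_zero_iff_eq_neg] at h0
  exact h0

lemma lie_EA_ET (hi : i ∈ Icc 1 N) (hj : j ∈ Icc 1 N) (hl : l ∈ Icc 1 N)
    (hij : i ≠ j) (hil : i ≠ l) (hjl : j ≠ l) : ⁅EA k N i, ET k N j l⁆ = 0 := by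
  rw [Finset.mem_Icc] at hi hj hl
  have h : ⁅eA k N i, eT k N j l⁆ ∈ ERels k N := by
    simp only [ERels, Set.mem_union, Set.mem_setOf_eq]
    exact Or.inl <| Or.inr
      ⟨i, j, l, hi.1, hi.2, hj.1, hj.2, hl.1, hl.2, hij, hil, hjl, Or.inl rfl⟩
  have h0 := emk_zero_of_rel h
  rw [emk_lie] at h0
  exact h0

lemma lie_EB_ET (hi : i ∈ Icc 1 N) (hj : j ∈ Icc 1 N) (hl : l ∈ Icc 1 N)
    (hij : i ≠ j) (hil : i ≠ l) (hjl : j ≠ l) : ⁅EB k N i, ET k N j l⁆ = 0 := by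
  rw [Finset.mem_Icc] at hi hj hl
  have h : ⁅eB k N i, eT k N j l⁆ ∈ ERels k N := by
    simp only [ERels, Set.mem_union, Set.mem_setOf_eq]
    exact Or.inl <| Or.inr
      ⟨i, j, l, hi.1, hi.2, hj.1, hj.2, hl.1, hl.2, hij, hil, hjl, Or.inr rfl⟩
  have h0 := emk_zero_of_rel h
  rw [emk_lie] at h0
  exact h0

lemma lie_EA_add_ET (hi : i ∈ Icc 1 N) (hj : j ∈ Icc 1 N) (hij : i ≠ j) :
    ⁅EA k N i + EA k N j, ET k N i j⁆ = 0 := by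
  rw [Finset.mem_Icc] at hi hj
  have h : ⁅eA k N i + eA k N j, eT k N i j⁆ ∈ ERels k N := by
    simp only [ERels, Set.mem_union, Set.mem_setOf_eq]
    exact Or.inr ⟨i, j, hi.1, hi.2, hj.1, hj.2, hij, Or.inl rfl⟩
  have h0 := emk_zero_of_rel h
  rw [emk_lie, map_add] at h0
  exact h0

lemma lie_EB_add_ET (hi : i ∈ Icc 1 N) (hj : j ∈ Icc 1 N) (hij : i ≠ j) :
    ⁅EB k N i + EB k N j, ET k N i j⁆ = 0 := by
  rw [Finset.mem_Icc] at hi hj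
  have h : ⁅eB k N i + eB k N j, eT k N i j⁆ ∈ ERels k N := by
    simp only [ERels, Set.mem_union, Set.mem_setOf_eq]
    exact Or.inr ⟨i, j, hi.1, hi.2, hj.1, hj.2, hij, Or.inr rfl⟩
  have h0 := emk_zero_of_rel h
  rw [emk_lie, map_add] at h0
  exact h0

end Rels
/-! ### Sums of generators over disjoint index sets -/

noncomputable def sT (k : Type) [Field k] [CharZero k] (N : ℕ) (S T : Finset ℕ) : Ell k N :=
  ∑ a ∈ S, ∑ b ∈ T, ET k N a b

noncomputable def sA (k : Type) [Field k] [CharZero k] (N : ℕ) (S : Finset ℕ) : Ell k N :=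
  ∑ a ∈ S, EA k N a

noncomputable def sB (k : Type) [Field k] [CharZero k] (N : ℕ) (S : Finset ℕ) : Ell k N :=
  ∑ a ∈ S, EB k N a

lemma dne {S T : Finset ℕ} (h : Disjoint S T) {a b : ℕ} (ha : a ∈ S) (hb : b ∈ T) :
    a ≠ b := by
  rintro rfl; exact Finset.disjoint_left.1 h ha hb

lemma sum_two {L : Type} [AddCommGroup L] {S : Finset ℕ} {a b : ℕ} (ha : a ∈ S) (hb : b ∈ S)
    (hab : a ≠ b) (f : ℕ → L) (h0 : ∀ c ∈ S, c ≠ a → c ≠ b → f c = 0) :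
    ∑ c ∈ S, f c = f a + f b := by
  rw [← Finset.add_sum_erase S f ha]
  congr 1
  refine Finset.sum_eq_single_of_mem b (Finset.mem_erase.2 ⟨Ne.symm hab, hb⟩) ?_
  intro c hc hcb
  exact h0 c (Finset.mem_of_mem_erase hc) (Finset.ne_of_mem_erase hc) hcb

section SumLemmas

variable {S T U V : Finset ℕ} {a b d : ℕ}

lemma sT_symm (hS : S ⊆ Icc 1 N) (hT : T ⊆ Icc 1 N) (hST : Disjoint S T) :
    sT k N S T = sT k N T S := by
  rw [sT, sT, Finset.sum_comm]
  exact Finset.sum_congr rfl fun b hb => Finset.sum_congr rfl fun a ha =>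
    ET_symm (hS ha) (hT hb) (dne hST ha hb)

lemma lie_sT_sT (hS : S ⊆ Icc 1 N) (hT : T ⊆ Icc 1 N) (hU : U ⊆ Icc 1 N) (hV : V ⊆ Icc 1 N)
    (hST : Disjoint S T) (hSU : Disjoint S U) (hSV : Disjoint S V)
    (hTU : Disjoint T U) (hTV : Disjoint T V) (hUV : Disjoint U V) :
    ⁅sT k N S T, sT k N U V⁆ = 0 := by
  simp only [sT, sum_lie, lie_sum]
  refine Finset.sum_eq_zero fun a ha => Finset.sum_eq_zero fun b hb =>
    Finset.sum_eq_zero fun c hc => Finset.sum_eq_zero fun e he => ?_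
  exact lie_ET_ET (hS hc) (hT he) (hU ha) (hV hb) (dne hST hc he) (dne hSU hc ha)
    (dne hSV hc hb) (dne hTU he ha) (dne hTV he hb) (dne hUV ha hb)

lemma lie_sT_braid (hS : S ⊆ Icc 1 N) (hT : T ⊆ Icc 1 N) (hU : U ⊆ Icc 1 N)
    (hST : Disjoint S T) (hSU : Disjoint S U) (hTU : Disjoint T U) :
    ⁅sT k N S T, sT k N S U + sT k N T U⁆ = 0 := by
  rw [sT, sum_lie]
  refine Finset.sum_eq_zero fun a ha => ?_
  rw [sum_lie]
  refine Finset.sum_eq_zero fun b hb => ?_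
  have hab : a ≠ b := dne hST ha hb
  rw [lie_add, sT, sT, lie_sum, lie_sum]
  have e1 : ∑ x ∈ S, ⁅ET k N a b, ∑ c ∈ U, ET k N x c⁆ =
      ∑ c ∈ U, ⁅ET k N a b, ET k N a c⁆ := by
    rw [Finset.sum_eq_single_of_mem a ha, lie_sum]
    intro x hx hxa
    rw [lie_sum]
    refine Finset.sum_eq_zero fun c hc => ?_
    exact lie_ET_ET (hS ha) (hT hb) (hS hx) (hU hc) hab (Ne.symm hxa)
      (dne hSU ha hc) (Ne.symm (dne hST hx hb)) (dne hTU hb hc) (dne hSU hx hc)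
  have e2 : ∑ x ∈ T, ⁅ET k N a b, ∑ c ∈ U, ET k N x c⁆ =
      ∑ c ∈ U, ⁅ET k N a b, ET k N b c⁆ := by
    rw [Finset.sum_eq_single_of_mem b hb, lie_sum]
    intro x hx hxb
    rw [lie_sum]
    refine Finset.sum_eq_zero fun c hc => ?_
    exact lie_ET_ET (hS ha) (hT hb) (hT hx) (hU hc) hab (dne hST ha hx)
      (dne hSU ha hc) (Ne.symm hxb) (dne hTU hb hc) (dne hTU hx hc)
  rw [e1, e2, ← Finset.sum_add_distrib]
  refine Finset.sum_eq_zero fun c hc => ?_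
  rw [← lie_add]
  exact lie_ET_braid (hS ha) (hT hb) (hU hc) hab (dne hSU ha hc) (dne hTU hb hc)

lemma lie_sA_sB (hS : S ⊆ Icc 1 N) (hT : T ⊆ Icc 1 N) (hST : Disjoint S T) :
    ⁅sA k N S, sB k N T⁆ = sT k N S T := by
  simp only [sA, sB, sT, sum_lie, lie_sum]
  rw [Finset.sum_comm]
  exact Finset.sum_congr rfl fun a ha => Finset.sum_congr rfl fun b hb =>
    lie_EA_EB (hS ha) (hT hb) (dne hST ha hb)

lemma lie_sA_sA (hS : S ⊆ Icc 1 N) (hT : T ⊆ Icc 1 N) (hST : Disjoint S T) :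
    ⁅sA k N S, sA k N T⁆ = 0 := by
  simp only [sA, sum_lie, lie_sum]
  exact Finset.sum_eq_zero fun b hb => Finset.sum_eq_zero fun a ha =>
    lie_EA_EA (hS ha) (hT hb) (dne hST ha hb)

lemma lie_sB_sB (hS : S ⊆ Icc 1 N) (hT : T ⊆ Icc 1 N) (hST : Disjoint S T) :
    ⁅sB k N S, sB k N T⁆ = 0 := by
  simp only [sB, sum_lie, lie_sum]
  exact Finset.sum_eq_zero fun b hb => Finset.sum_eq_zero fun a ha =>
    lie_EB_EB (hS ha) (hT hb) (dne hST ha hb)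

lemma lie_sA_sB_diag (hS : S ⊆ Icc 1 N) :
    ⁅sA k N S, sB k N S⁆ = -sT k N S (Icc 1 N \ S) := by
  simp only [sA, sB, sT, sum_lie, lie_sum]
  rw [← Finset.sum_neg_distrib]
  refine Finset.sum_congr rfl fun a ha => ?_
  have haIcc : a ∈ Icc 1 N := hS ha
  have row : ∑ x ∈ S, ⁅EA k N x, EB k N a⁆ =
      ⁅EA k N a, EB k N a⁆ + ∑ b ∈ S.erase a, ET k N a b := by
    rw [← Finset.add_sum_erase S _ ha]
    congr 1
    refine Finset.sum_congr rfl fun b hb => ?_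
    rw [lie_EA_EB (hS (Finset.mem_of_mem_erase hb)) haIcc (Finset.ne_of_mem_erase hb)]
    exact (ET_symm (k := k) (N := N) (hS (Finset.mem_of_mem_erase hb)) haIcc (Finset.ne_of_mem_erase hb))
  have hdecomp : (Icc 1 N).erase a = (S.erase a) ∪ (Icc 1 N \ S) := by
    ext x
    simp only [Finset.mem_erase, Finset.mem_union, Finset.mem_sdiff]
    constructor
    · rintro ⟨hxa, hx⟩
      by_cases hxS : x ∈ S
      · exact Or.inl ⟨hxa, hxS⟩
      · exact Or.inr ⟨hx, hxS⟩
    · rintro (⟨hxa, hxS⟩ | ⟨hx, hxS⟩)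
      · exact ⟨hxa, hS hxS⟩
      · exact ⟨fun h => hxS (h ▸ ha), hx⟩
  have hdisj : Disjoint (S.erase a) (Icc 1 N \ S) :=
    Finset.disjoint_left.2 fun x hx hx' =>
      (Finset.mem_sdiff.1 hx').2 (Finset.mem_of_mem_erase hx)
  rw [row, lie_EA_EB_diag haIcc, hdecomp, Finset.sum_union hdisj]
  abel

lemma lie_sA_sT (hS : S ⊆ Icc 1 N) (hU : U ⊆ Icc 1 N) (hV : V ⊆ Icc 1 N)
    (hSU : Disjoint S U) (hSV : Disjoint S V) (hUV : Disjoint U V) :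
    ⁅sA k N S, sT k N U V⁆ = 0 := by
  simp only [sA, sT, sum_lie, lie_sum]
  exact Finset.sum_eq_zero fun a ha => Finset.sum_eq_zero fun c hc =>
    Finset.sum_eq_zero fun e he => lie_EA_ET (hS he) (hU ha) (hV hc)
      (dne hSU he ha) (dne hSV he hc) (dne hUV ha hc)

lemma lie_sB_sT (hS : S ⊆ Icc 1 N) (hU : U ⊆ Icc 1 N) (hV : V ⊆ Icc 1 N)
    (hSU : Disjoint S U) (hSV : Disjoint S V) (hUV : Disjoint U V) :
    ⁅sB k N S, sT k N U V⁆ = 0 := by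
  simp only [sB, sT, sum_lie, lie_sum]
  exact Finset.sum_eq_zero fun a ha => Finset.sum_eq_zero fun c hc =>
    Finset.sum_eq_zero fun e he => lie_EB_ET (hS he) (hU ha) (hV hc)
      (dne hSU he ha) (dne hSV he hc) (dne hUV ha hc)

lemma lie_sA_add_sT (hS : S ⊆ Icc 1 N) (hT : T ⊆ Icc 1 N) (hST : Disjoint S T) :
    ⁅sA k N S + sA k N T, sT k N S T⁆ = 0 := by
  rw [sT]
  simp only [lie_sum]
  refine Finset.sum_eq_zero fun a ha => Finset.sum_eq_zero fun b hb => ?_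
  have hab : a ≠ b := dne hST ha hb
  rw [add_lie, sA, sA, sum_lie, sum_lie]
  have e1 : ∑ x ∈ S, ⁅EA k N x, ET k N a b⁆ = ⁅EA k N a, ET k N a b⁆ :=
    Finset.sum_eq_single_of_mem a ha fun x hx hxa =>
      lie_EA_ET (hS hx) (hS ha) (hT hb) hxa (dne hST hx hb) hab
  have e2 : ∑ x ∈ T, ⁅EA k N x, ET k N a b⁆ = ⁅EA k N b, ET k N a b⁆ :=
    Finset.sum_eq_single_of_mem b hb fun x hx hxb =>
      lie_EA_ET (hT hx) (hS ha) (hT hb) (Ne.symm (dne hST ha hx)) hxb hab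
  rw [e1, e2, ← add_lie]
  exact lie_EA_add_ET (hS ha) (hT hb) hab

lemma lie_sB_add_sT (hS : S ⊆ Icc 1 N) (hT : T ⊆ Icc 1 N) (hST : Disjoint S T) :
    ⁅sB k N S + sB k N T, sT k N S T⁆ = 0 := by
  rw [sT]
  simp only [lie_sum]
  refine Finset.sum_eq_zero fun a ha => Finset.sum_eq_zero fun b hb => ?_
  have hab : a ≠ b := dne hST ha hb
  rw [add_lie, sB, sB, sum_lie, sum_lie]
  have e1 : ∑ x ∈ S, ⁅EB k N x, ET k N a b⁆ = ⁅EB k N a, ET k N a b⁆ :=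
    Finset.sum_eq_single_of_mem a ha fun x hx hxa =>
      lie_EB_ET (hS hx) (hS ha) (hT hb) hxa (dne hST hx hb) hab
  have e2 : ∑ x ∈ T, ⁅EB k N x, ET k N a b⁆ = ⁅EB k N b, ET k N a b⁆ :=
    Finset.sum_eq_single_of_mem b hb fun x hx hxb =>
      lie_EB_ET (hT hx) (hS ha) (hT hb) (Ne.symm (dne hST ha hx)) hxb hab
  rw [e1, e2, ← add_lie]
  exact lie_EB_add_ET (hS ha) (hT hb) hab

end SumLemmas
section CommLemmas

variable {S T : Finset ℕ} {a b : ℕ}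

lemma lie_sT_ET_left (hS : S ⊆ Icc 1 N) (hT : T ⊆ Icc 1 N) (hST : Disjoint S T)
    (ha : a ∈ S) (hb : b ∈ S) (hab : a ≠ b) : ⁅sT k N S T, ET k N a b⁆ = 0 := by
  rw [sT, Finset.sum_comm, sum_lie]
  refine Finset.sum_eq_zero fun d hd => ?_
  rw [sum_lie]
  rw [sum_two ha hb hab (fun c => ⁅ET k N c d, ET k N a b⁆)
    (fun c hc hca hcb => lie_ET_ET (hS hc) (hT hd) (hS ha) (hS hb)
    (dne hST hc hd) hca hcb (Ne.symm (dne hST ha hd)) (Ne.symm (dne hST hb hd)) hab)]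
  have h3 := lie_ET_braid (k := k) (N := N) (hS ha) (hS hb) (hT hd) hab (dne hST ha hd) (dne hST hb hd)
  have h4 : ⁅ET k N a b, ET k N a d⁆ + ⁅ET k N a b, ET k N b d⁆ = 0 := by
    rw [← lie_add]; exact h3
  have e1 : ⁅ET k N a d, ET k N a b⁆ = -⁅ET k N a b, ET k N a d⁆ :=
    (lie_skew (ET k N a d) (ET k N a b)).symm
  have e2 : ⁅ET k N b d, ET k N a b⁆ = -⁅ET k N a b, ET k N b d⁆ :=
    (lie_skew (ET k N b d) (ET k N a b)).symm
  rw [e1, e2, ← neg_add, h4, neg_zero]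

lemma lie_sT_ET_right (hS : S ⊆ Icc 1 N) (hT : T ⊆ Icc 1 N) (hST : Disjoint S T)
    (ha : a ∈ T) (hb : b ∈ T) (hab : a ≠ b) : ⁅sT k N S T, ET k N a b⁆ = 0 := by
  rw [sT, sum_lie]
  refine Finset.sum_eq_zero fun c hc => ?_
  rw [sum_lie]
  rw [sum_two ha hb hab (fun d => ⁅ET k N c d, ET k N a b⁆)
    (fun d hd hda hdb => lie_ET_ET (hS hc) (hT hd) (hT ha) (hT hb)
    (dne hST hc hd) (dne hST hc ha) (dne hST hc hb) hda hdb hab)]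
  rw [ET_symm (hS hc) (hT ha) (dne hST hc ha), ET_symm (hS hc) (hT hb) (dne hST hc hb)]
  have h3 := lie_ET_braid (k := k) (N := N) (hT ha) (hT hb) (hS hc) hab
    (Ne.symm (dne hST hc ha)) (Ne.symm (dne hST hc hb))
  have h4 : ⁅ET k N a b, ET k N a c⁆ + ⁅ET k N a b, ET k N b c⁆ = 0 := by
    rw [← lie_add]; exact h3
  have e1 : ⁅ET k N a c, ET k N a b⁆ = -⁅ET k N a b, ET k N a c⁆ :=
    (lie_skew (ET k N a c) (ET k N a b)).symm
  have e2 : ⁅ET k N b c, ET k N a b⁆ = -⁅ET k N a b, ET k N b c⁆ :=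
    (lie_skew (ET k N b c) (ET k N a b)).symm
  rw [e1, e2, ← neg_add, h4, neg_zero]

lemma lie_sT_ET_off (hS : S ⊆ Icc 1 N) (hT : T ⊆ Icc 1 N) (hST : Disjoint S T)
    (haI : a ∈ Icc 1 N) (hbI : b ∈ Icc 1 N) (haS : a ∉ S) (haT : a ∉ T)
    (hbS : b ∉ S) (hbT : b ∉ T) (hab : a ≠ b) : ⁅sT k N S T, ET k N a b⁆ = 0 := by
  rw [sT]
  simp only [sum_lie]
  refine Finset.sum_eq_zero fun c hc => Finset.sum_eq_zero fun d hd => ?_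
  exact lie_ET_ET (hS hc) (hT hd) haI hbI (dne hST hc hd)
    (fun h => haS (h ▸ hc)) (fun h => hbS (h ▸ hc))
    (fun h => haT (h ▸ hd)) (fun h => hbT (h ▸ hd)) hab

lemma lie_sA_ET_mem (hS : S ⊆ Icc 1 N) (ha : a ∈ S) (hb : b ∈ S) (hab : a ≠ b) :
    ⁅sA k N S, ET k N a b⁆ = 0 := by
  rw [sA, sum_lie]
  rw [sum_two ha hb hab (fun c => ⁅EA k N c, ET k N a b⁆) (fun c hc hca hcb =>
    lie_EA_ET (hS hc) (hS ha) (hS hb) hca hcb hab)]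
  rw [← add_lie]
  exact lie_EA_add_ET (hS ha) (hS hb) hab

lemma lie_sB_ET_mem (hS : S ⊆ Icc 1 N) (ha : a ∈ S) (hb : b ∈ S) (hab : a ≠ b) :
    ⁅sB k N S, ET k N a b⁆ = 0 := by
  rw [sB, sum_lie]
  rw [sum_two ha hb hab (fun c => ⁅EB k N c, ET k N a b⁆) (fun c hc hca hcb =>
    lie_EB_ET (hS hc) (hS ha) (hS hb) hca hcb hab)]
  rw [← add_lie]
  exact lie_EB_add_ET (hS ha) (hS hb) hab

lemma lie_sA_ET_off (hS : S ⊆ Icc 1 N) (haI : a ∈ Icc 1 N) (hbI : b ∈ Icc 1 N)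
    (haS : a ∉ S) (hbS : b ∉ S) (hab : a ≠ b) : ⁅sA k N S, ET k N a b⁆ = 0 := by
  rw [sA, sum_lie]
  refine Finset.sum_eq_zero fun c hc => ?_
  exact lie_EA_ET (hS hc) haI hbI (fun h => haS (h ▸ hc)) (fun h => hbS (h ▸ hc)) hab

lemma lie_sB_ET_off (hS : S ⊆ Icc 1 N) (haI : a ∈ Icc 1 N) (hbI : b ∈ Icc 1 N)
    (haS : a ∉ S) (hbS : b ∉ S) (hab : a ≠ b) : ⁅sB k N S, ET k N a b⁆ = 0 := by
  rw [sB, sum_lie]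
  refine Finset.sum_eq_zero fun c hc => ?_
  exact lie_EB_ET (hS hc) haI hbI (fun h => haS (h ▸ hc)) (fun h => hbS (h ▸ hc)) hab

end CommLemmas
/-! ### Blocks for the partial composition -/

def blk (m p q : ℕ) : Finset ℕ :=
  if q < p then {q} else if q = p then Finset.Icc p (p + m - 1) else {q + m - 1}

lemma mem_blk {m p q x : ℕ} :
    x ∈ blk m p q ↔ ((q < p ∧ x = q) ∨ (q = p ∧ p ≤ x ∧ x ≤ p + m - 1) ∨
      (p < q ∧ x = q + m - 1)) := by
  rw [blk]
  rcases lt_trichotomy q p with h | h | h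
  · rw [if_pos h, Finset.mem_singleton]; omega
  · rw [if_neg (by omega), if_pos h, Finset.mem_Icc]; omega
  · rw [if_neg (by omega), if_neg (by omega), Finset.mem_singleton]; omega

lemma blk_subset {n m p q : ℕ} (hp1 : 1 ≤ p) (hpn : p ≤ n) (hq1 : 1 ≤ q) (hqn : q ≤ n) :
    blk m p q ⊆ Icc 1 (n + m - 1) := by
  intro x hx
  rw [mem_blk] at hx
  rw [Finset.mem_Icc]
  omega

lemma blk_disjoint {m p q q' : ℕ} (hp1 : 1 ≤ p) (h : q ≠ q') :
    Disjoint (blk m p q) (blk m p q') := by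
  rw [Finset.disjoint_left]
  intro x hx hx'
  rw [mem_blk] at hx hx'
  omega

lemma blk_biUnion {n m p : ℕ} (hn : 1 ≤ n) (hp1 : 1 ≤ p) (hpn : p ≤ n) :
    (Icc 1 n).biUnion (blk m p) = Icc 1 (n + m - 1) := by
  ext x
  simp only [Finset.mem_biUnion, Finset.mem_Icc, mem_blk]
  constructor
  · rintro ⟨q, hq, hx⟩; omega
  · intro hx
    by_cases h1 : x < p
    · exact ⟨x, by omega, by omega⟩
    · by_cases h2 : x ≤ p + m - 1
      · exact ⟨p, by omega, by omega⟩
      · exact ⟨x + 1 - m, by omega, by omega⟩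

lemma blk_biUnion_erase {n m p q : ℕ} (hn : 1 ≤ n) (hp1 : 1 ≤ p) (hpn : p ≤ n)
    (hq : q ∈ Icc 1 n) :
    ((Icc 1 n).erase q).biUnion (blk m p) = Icc 1 (n + m - 1) \ blk m p q := by
  ext x
  constructor
  · intro hx
    rcases Finset.mem_biUnion.1 hx with ⟨q', hq', hxq'⟩
    have hq'2 := Finset.mem_of_mem_erase hq'
    have h1 := Finset.mem_Icc.1 hq'2
    rw [Finset.mem_sdiff]
    refine ⟨blk_subset hp1 hpn h1.1 h1.2 hxq', ?_⟩
    intro hxq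
    have h2 := Finset.ne_of_mem_erase hq'
    rw [mem_blk] at hxq hxq'
    omega
  · intro hx
    rw [Finset.mem_sdiff] at hx
    have hx1 : x ∈ (Icc 1 n).biUnion (blk m p) := (blk_biUnion hn hp1 hpn) ▸ hx.1
    rcases Finset.mem_biUnion.1 hx1 with ⟨q', hq', hxq'⟩
    refine Finset.mem_biUnion.2 ⟨q', Finset.mem_erase.2 ⟨?_, hq'⟩, hxq'⟩
    rintro rfl
    exact hx.2 hxq'
/-! ### Descending morphisms to the quotients -/

noncomputable def descendE {k : Type} [Field k] [CharZero k] {L : Type} [LieRing L]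
    [LieAlgebra k L] (n : ℕ) (f : FreeLieAlgebra k (EGen n) →ₗ⁅k⁆ L)
    (h : ∀ x ∈ ERels k n, f x = 0) : Ell k n →ₗ⁅k⁆ L where
  toLinearMap := Submodule.liftQ (EIdeal k n).toSubmodule f.toLinearMap (by
    intro x hx
    have hx' : x ∈ EIdeal k n := hx
    have : EIdeal k n ≤ f.ker := by
      rw [EIdeal]
      rw [LieSubmodule.lieSpan_le]
      intro y hy
      exact LieHom.mem_ker.2 (h y hy)
    exact LinearMap.mem_ker.2 (LieHom.mem_ker.1 (this hx')))
  map_lie' := by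
    rintro ⟨x⟩ ⟨y⟩
    exact f.map_lie x y

lemma descendE_mk {k : Type} [Field k] [CharZero k] {L : Type} [LieRing L]
    [LieAlgebra k L] (n : ℕ) (f : FreeLieAlgebra k (EGen n) →ₗ⁅k⁆ L)
    (h : ∀ x ∈ ERels k n, f x = 0) (x : FreeLieAlgebra k (EGen n)) :
    descendE n f h (LieSubmodule.Quotient.mk' (EIdeal k n) x) = f x := rfl

noncomputable def descendDK {k : Type} [Field k] [CharZero k] {L : Type} [LieRing L]
    [LieAlgebra k L] (n : ℕ) (f : FreeLieAlgebra k (DKGen n) →ₗ⁅k⁆ L)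
    (h : ∀ x ∈ DKRels k n, f x = 0) : DK k n →ₗ⁅k⁆ L where
  toLinearMap := Submodule.liftQ (DKIdeal k n).toSubmodule f.toLinearMap (by
    intro x hx
    have hx' : x ∈ DKIdeal k n := hx
    have : DKIdeal k n ≤ f.ker := by
      rw [DKIdeal]
      rw [LieSubmodule.lieSpan_le]
      intro y hy
      exact LieHom.mem_ker.2 (h y hy)
    exact LinearMap.mem_ker.2 (LieHom.mem_ker.1 (this hx')))
  map_lie' := by
    rintro ⟨x⟩ ⟨y⟩
    exact f.map_lie x y

lemma descendDK_mk {k : Type} [Field k] [CharZero k] {L : Type} [LieRing L]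
    [LieAlgebra k L] (n : ℕ) (f : FreeLieAlgebra k (DKGen n) →ₗ⁅k⁆ L)
    (h : ∀ x ∈ DKRels k n, f x = 0) (x : FreeLieAlgebra k (DKGen n)) :
    descendDK n f h (LieSubmodule.Quotient.mk' (DKIdeal k n) x) = f x := rfl
/-! ### The generator maps -/

noncomputable def uGen (k : Type) [Field k] [CharZero k] (n m p : ℕ) :
    EGen n → Ell k (n + m - 1)
  | Sum.inl ⟨(i, j), _⟩ => sT k (n + m - 1) (blk m p i) (blk m p j)
  | Sum.inr (Sum.inl ⟨i, _⟩) => sA k (n + m - 1) (blk m p i)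
  | Sum.inr (Sum.inr ⟨i, _⟩) => sB k (n + m - 1) (blk m p i)

noncomputable def u0 (k : Type) [Field k] [CharZero k] (n m p : ℕ) :
    FreeLieAlgebra k (EGen n) →ₗ⁅k⁆ Ell k (n + m - 1) :=
  FreeLieAlgebra.lift k (uGen k n m p)

lemma u0_eT {n m p i j : ℕ} (h : (1 ≤ i ∧ i ≤ n) ∧ (1 ≤ j ∧ j ≤ n) ∧ i ≠ j) :
    u0 k n m p (eT k n i j) = sT k (n + m - 1) (blk m p i) (blk m p j) := by
  rw [eT, dif_pos h, u0]
  exact FreeLieAlgebra.lift_of_apply _ _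

lemma u0_eA {n m p i : ℕ} (h : 1 ≤ i ∧ i ≤ n) :
    u0 k n m p (eA k n i) = sA k (n + m - 1) (blk m p i) := by
  rw [eA, dif_pos h, u0]
  exact FreeLieAlgebra.lift_of_apply _ _

lemma u0_eB {n m p i : ℕ} (h : 1 ≤ i ∧ i ≤ n) :
    u0 k n m p (eB k n i) = sB k (n + m - 1) (blk m p i) := by
  rw [eB, dif_pos h, u0]
  exact FreeLieAlgebra.lift_of_apply _ _

noncomputable def vGen (k : Type) [Field k] [CharZero k] (n m p : ℕ) :
    DKGen m → Ell k (n + m - 1) :=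
  fun g => ET k (n + m - 1) (g.1.1 + p - 1) (g.1.2 + p - 1)

noncomputable def v0 (k : Type) [Field k] [CharZero k] (n m p : ℕ) :
    FreeLieAlgebra k (DKGen m) →ₗ⁅k⁆ Ell k (n + m - 1) :=
  FreeLieAlgebra.lift k (vGen k n m p)

lemma v0_dkOf {n m p i j : ℕ} (h : (1 ≤ i ∧ i ≤ m) ∧ (1 ≤ j ∧ j ≤ m) ∧ i ≠ j) :
    v0 k n m p (dkOf k m i j) = ET k (n + m - 1) (i + p - 1) (j + p - 1) := by
  rw [dkOf, dif_pos h, v0]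
  exact FreeLieAlgebra.lift_of_apply _ _

/-! ### The relations are killed -/

lemma u0_rels {n m p : ℕ} (hn : 1 ≤ n) (hp1 : 1 ≤ p) (hpn : p ≤ n) :
    ∀ x ∈ ERels k n, u0 k n m p x = 0 := by
  intro x hx
  set N := n + m - 1 with hN
  have hsub : ∀ q : ℕ, 1 ≤ q → q ≤ n → blk m p q ⊆ Icc 1 N :=
    fun q h1 h2 => blk_subset hp1 hpn h1 h2
  have hdisj : ∀ q q' : ℕ, q ≠ q' → Disjoint (blk m p q) (blk m p q') :=
    fun q q' h => blk_disjoint hp1 h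
  simp only [ERels, Set.mem_union, Set.mem_setOf_eq] at hx
  rcases hx with ((((((hx | hx) | hx) | hx) | hx) | hx) | hx) | hx
  · obtain ⟨i, j, hi1, hi2, hj1, hj2, hij, rfl⟩ := hx
    rw [map_sub, u0_eT ⟨⟨hi1, hi2⟩, ⟨hj1, hj2⟩, hij⟩,
      u0_eT ⟨⟨hj1, hj2⟩, ⟨hi1, hi2⟩, Ne.symm hij⟩, sub_eq_zero]
    exact sT_symm (hsub i hi1 hi2) (hsub j hj1 hj2) (hdisj i j hij)
  · obtain ⟨i, j, l, m', hi1, hi2, hj1, hj2, hl1, hl2, hm1, hm2,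
      hij, hil, him, hjl, hjm, hlm, rfl⟩ := hx
    rw [LieHom.map_lie, u0_eT ⟨⟨hi1, hi2⟩, ⟨hj1, hj2⟩, hij⟩,
      u0_eT ⟨⟨hl1, hl2⟩, ⟨hm1, hm2⟩, hlm⟩]
    exact lie_sT_sT (hsub i hi1 hi2) (hsub j hj1 hj2) (hsub l hl1 hl2) (hsub m' hm1 hm2)
      (hdisj i j hij) (hdisj i l hil) (hdisj i m' him) (hdisj j l hjl)
      (hdisj j m' hjm) (hdisj l m' hlm)
  · obtain ⟨i, j, l, hi1, hi2, hj1, hj2, hl1, hl2, hij, hil, hjl, rfl⟩ := hx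
    rw [LieHom.map_lie, map_add, u0_eT ⟨⟨hi1, hi2⟩, ⟨hj1, hj2⟩, hij⟩,
      u0_eT ⟨⟨hi1, hi2⟩, ⟨hl1, hl2⟩, hil⟩, u0_eT ⟨⟨hj1, hj2⟩, ⟨hl1, hl2⟩, hjl⟩]
    exact lie_sT_braid (hsub i hi1 hi2) (hsub j hj1 hj2) (hsub l hl1 hl2)
      (hdisj i j hij) (hdisj i l hil) (hdisj j l hjl)
  · obtain ⟨i, j, hi1, hi2, hj1, hj2, hij, rfl⟩ := hx
    rw [map_sub, LieHom.map_lie, u0_eA ⟨hi1, hi2⟩, u0_eB ⟨hj1, hj2⟩,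
      u0_eT ⟨⟨hi1, hi2⟩, ⟨hj1, hj2⟩, hij⟩, sub_eq_zero]
    exact lie_sA_sB (hsub i hi1 hi2) (hsub j hj1 hj2) (hdisj i j hij)
  · obtain ⟨i, j, hi1, hi2, hj1, hj2, hij, hx | hx⟩ := hx <;> subst hx
    · rw [LieHom.map_lie, u0_eA ⟨hi1, hi2⟩, u0_eA ⟨hj1, hj2⟩]
      exact lie_sA_sA (hsub i hi1 hi2) (hsub j hj1 hj2) (hdisj i j hij)
    · rw [LieHom.map_lie, u0_eB ⟨hi1, hi2⟩, u0_eB ⟨hj1, hj2⟩]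
      exact lie_sB_sB (hsub i hi1 hi2) (hsub j hj1 hj2) (hdisj i j hij)
  · obtain ⟨i, hi1, hi2, rfl⟩ := hx
    rw [map_add, LieHom.map_lie, u0_eA ⟨hi1, hi2⟩, u0_eB ⟨hi1, hi2⟩]
    have hmap : u0 k n m p (∑ j ∈ (Icc 1 n).erase i, eT k n i j) =
        ∑ j ∈ (Icc 1 n).erase i, sT k N (blk m p i) (blk m p j) := by
      rw [lieHom_sum]
      refine Finset.sum_congr rfl fun j hj => ?_
      have hj2 := Finset.mem_Icc.1 (Finset.mem_of_mem_erase hj)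
      exact u0_eT ⟨⟨hi1, hi2⟩, ⟨hj2.1, hj2.2⟩, Ne.symm (Finset.ne_of_mem_erase hj)⟩
    rw [hmap]
    have hsum : ∑ j ∈ (Icc 1 n).erase i, sT k N (blk m p i) (blk m p j) =
        sT k N (blk m p i) (Icc 1 N \ blk m p i) := by
      simp only [sT]
      rw [Finset.sum_comm]
      refine Finset.sum_congr rfl fun a ha => ?_
      rw [← Finset.sum_biUnion, blk_biUnion_erase hn hp1 hpn (Finset.mem_Icc.2 ⟨hi1, hi2⟩)]
      exact fun q hq q' hq' hne => blk_disjoint hp1 hne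
    rw [hsum, lie_sA_sB_diag (hsub i hi1 hi2), neg_add_cancel]
  · obtain ⟨i, j, l, hi1, hi2, hj1, hj2, hl1, hl2, hij, hil, hjl, hx | hx⟩ := hx <;> subst hx
    · rw [LieHom.map_lie, u0_eA ⟨hi1, hi2⟩, u0_eT ⟨⟨hj1, hj2⟩, ⟨hl1, hl2⟩, hjl⟩]
      exact lie_sA_sT (hsub i hi1 hi2) (hsub j hj1 hj2) (hsub l hl1 hl2)
        (hdisj i j hij) (hdisj i l hil) (hdisj j l hjl)
    · rw [LieHom.map_lie, u0_eB ⟨hi1, hi2⟩, u0_eT ⟨⟨hj1, hj2⟩, ⟨hl1, hl2⟩, hjl⟩]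
      exact lie_sB_sT (hsub i hi1 hi2) (hsub j hj1 hj2) (hsub l hl1 hl2)
        (hdisj i j hij) (hdisj i l hil) (hdisj j l hjl)
  · obtain ⟨i, j, hi1, hi2, hj1, hj2, hij, hx | hx⟩ := hx <;> subst hx
    · rw [LieHom.map_lie, map_add, u0_eA ⟨hi1, hi2⟩, u0_eA ⟨hj1, hj2⟩,
        u0_eT ⟨⟨hi1, hi2⟩, ⟨hj1, hj2⟩, hij⟩]
      exact lie_sA_add_sT (hsub i hi1 hi2) (hsub j hj1 hj2) (hdisj i j hij)
    · rw [LieHom.map_lie, map_add, u0_eB ⟨hi1, hi2⟩, u0_eB ⟨hj1, hj2⟩,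
        u0_eT ⟨⟨hi1, hi2⟩, ⟨hj1, hj2⟩, hij⟩]
      exact lie_sB_add_sT (hsub i hi1 hi2) (hsub j hj1 hj2) (hdisj i j hij)

lemma v0_rels {n m p : ℕ} (hn : 1 ≤ n) (hp1 : 1 ≤ p) (hpn : p ≤ n) :
    ∀ x ∈ DKRels k m, v0 k n m p x = 0 := by
  intro x hx
  set N := n + m - 1 with hN
  have hr : ∀ q : ℕ, 1 ≤ q → q ≤ m → q + p - 1 ∈ Icc 1 N := by
    intro q h1 h2
    rw [Finset.mem_Icc]
    omega
  simp only [DKRels, Set.mem_union, Set.mem_setOf_eq] at hx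
  rcases hx with (hx | hx) | hx
  · obtain ⟨i, j, hi1, hi2, hj1, hj2, hij, rfl⟩ := hx
    rw [map_sub, v0_dkOf ⟨⟨hi1, hi2⟩, ⟨hj1, hj2⟩, hij⟩,
      v0_dkOf ⟨⟨hj1, hj2⟩, ⟨hi1, hi2⟩, Ne.symm hij⟩, sub_eq_zero]
    exact ET_symm (hr i hi1 hi2) (hr j hj1 hj2) (by omega)
  · obtain ⟨i, j, l, hi1, hi2, hj1, hj2, hl1, hl2, hij, hil, hjl, rfl⟩ := hx
    rw [LieHom.map_lie, map_add, v0_dkOf ⟨⟨hi1, hi2⟩, ⟨hj1, hj2⟩, hij⟩,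
      v0_dkOf ⟨⟨hi1, hi2⟩, ⟨hl1, hl2⟩, hil⟩, v0_dkOf ⟨⟨hl1, hl2⟩, ⟨hj1, hj2⟩, Ne.symm hjl⟩]
    rw [ET_symm (hr l hl1 hl2) (hr j hj1 hj2) (by omega)]
    exact lie_ET_braid (hr i hi1 hi2) (hr j hj1 hj2) (hr l hl1 hl2)
      (by omega) (by omega) (by omega)
  · obtain ⟨i, j, l, m', hi1, hi2, hj1, hj2, hl1, hl2, hm1, hm2,
      hij, hil, him, hjl, hjm, hlm, rfl⟩ := hx
    rw [LieHom.map_lie, v0_dkOf ⟨⟨hi1, hi2⟩, ⟨hj1, hj2⟩, hij⟩,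
      v0_dkOf ⟨⟨hl1, hl2⟩, ⟨hm1, hm2⟩, hlm⟩]
    exact lie_ET_ET (hr i hi1 hi2) (hr j hj1 hj2) (hr l hl1 hl2) (hr m' hm1 hm2)
      (by omega) (by omega) (by omega) (by omega) (by omega) (by omega)
/-! ### Centralizers and commutation -/

lemma blk_of_lt {m p q : ℕ} (h : q < p) : blk m p q = {q} := if_pos h

lemma blk_self {m p : ℕ} : blk m p p = Finset.Icc p (p + m - 1) := by
  rw [blk, if_neg (lt_irrefl p), if_pos rfl]

lemma blk_of_gt {m p q : ℕ} (h : p < q) : blk m p q = {q + m - 1} := by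
  rw [blk, if_neg (by omega), if_neg (by omega)]

lemma sT_singleton {a b : ℕ} : sT k N {a} {b} = ET k N a b := by simp [sT]

lemma sT_singleton_right {S : Finset ℕ} {b : ℕ} :
    sT k N S {b} = ∑ a ∈ S, ET k N a b := by simp [sT]

lemma sT_singleton_left {S : Finset ℕ} {a : ℕ} :
    sT k N {a} S = ∑ b ∈ S, ET k N a b := by simp [sT]

lemma sA_singleton {a : ℕ} : sA k N {a} = EA k N a := by simp [sA]

lemma sB_singleton {a : ℕ} : sB k N {a} = EB k N a := by simp [sB]

def centR (k : Type) [Field k] [CharZero k] {L : Type} [LieRing L] [LieAlgebra k L]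
    (y : L) : LieSubalgebra k L where
  carrier := {x | ⁅x, y⁆ = 0}
  add_mem' := by
    intro a b ha hb
    simp only [Set.mem_setOf_eq] at *
    rw [add_lie, ha, hb, add_zero]
  zero_mem' := by simp only [Set.mem_setOf_eq, zero_lie]
  smul_mem' := by
    intro c a ha
    simp only [Set.mem_setOf_eq] at *
    rw [smul_lie, ha, smul_zero]
  lie_mem' := by
    intro a b ha hb
    simp only [Set.mem_setOf_eq] at *
    rw [lie_lie, ha, hb, lie_zero, lie_zero, sub_zero]

def centL (k : Type) [Field k] [CharZero k] {L : Type} [LieRing L] [LieAlgebra k L]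
    (x : L) : LieSubalgebra k L where
  carrier := {y | ⁅x, y⁆ = 0}
  add_mem' := by
    intro a b ha hb
    simp only [Set.mem_setOf_eq] at *
    rw [lie_add, ha, hb, add_zero]
  zero_mem' := by simp only [Set.mem_setOf_eq, lie_zero]
  smul_mem' := by
    intro c a ha
    simp only [Set.mem_setOf_eq] at *
    rw [lie_smul, ha, smul_zero]
  lie_mem' := by
    intro a b ha hb
    simp only [Set.mem_setOf_eq] at *
    rw [leibniz_lie, ha, hb, lie_zero, zero_lie, add_zero]

lemma mem_centR {L : Type} [LieRing L] [LieAlgebra k L] {y x : L} :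
    x ∈ centR k y ↔ ⁅x, y⁆ = 0 := Iff.rfl

lemma mem_centL {L : Type} [LieRing L] [LieAlgebra k L] {x y : L} :
    y ∈ centL k x ↔ ⁅x, y⁆ = 0 := Iff.rfl

lemma lift_mem_lieSpan {X : Type} {L : Type} [LieRing L] [LieAlgebra k L] (f : X → L)
    (x : FreeLieAlgebra k X) :
    FreeLieAlgebra.lift k f x ∈ LieSubalgebra.lieSpan k L (Set.range f) := by
  set K := LieSubalgebra.lieSpan k L (Set.range f) with hK
  let g : X → K := fun a => ⟨f a, LieSubalgebra.subset_lieSpan ⟨a, rfl⟩⟩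
  have h : K.incl.comp (FreeLieAlgebra.lift k g) = FreeLieAlgebra.lift k f := by
    apply FreeLieAlgebra.hom_ext
    intro a
    simp only [LieHom.comp_apply, FreeLieAlgebra.lift_of_apply]
    rfl
  have h2 := congrFun (congrArg DFunLike.coe h) x
  simp only [LieHom.comp_apply] at h2
  rw [← h2]
  exact (FreeLieAlgebra.lift k g x).2

lemma gen_comm {n m p : ℕ} (hn : 1 ≤ n) (hp1 : 1 ≤ p) (hpn : p ≤ n)
    (g : EGen n) (h : DKGen m) : ⁅uGen k n m p g, vGen k n m p h⁆ = 0 := by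
  obtain ⟨⟨i, j⟩, hh⟩ := h
  obtain ⟨⟨hi1, him⟩, ⟨hj1, hjm⟩, hij⟩ := hh
  set N := n + m - 1 with hN
  have hsub : ∀ q : ℕ, 1 ≤ q → q ≤ n → blk m p q ⊆ Icc 1 N :=
    fun q h1 h2 => blk_subset hp1 hpn h1 h2
  have haBp : i + p - 1 ∈ blk m p p := by rw [blk_self, Finset.mem_Icc]; omega
  have hbBp : j + p - 1 ∈ blk m p p := by rw [blk_self, Finset.mem_Icc]; omega
  have haI : i + p - 1 ∈ Icc 1 N := hsub p hp1 hpn haBp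
  have hbI : j + p - 1 ∈ Icc 1 N := hsub p hp1 hpn hbBp
  have hab : i + p - 1 ≠ j + p - 1 := by omega
  have hvg : vGen k n m p ⟨(i, j), ⟨⟨hi1, him⟩, ⟨hj1, hjm⟩, hij⟩⟩ =
      ET k N (i + p - 1) (j + p - 1) := rfl
  rw [hvg]
  match g with
  | Sum.inl ⟨(i', j'), hg⟩ =>
    obtain ⟨⟨hi'1, hi'n⟩, ⟨hj'1, hj'n⟩, hij'⟩ := hg
    have hug : uGen k n m p (Sum.inl ⟨(i', j'), ⟨⟨hi'1, hi'n⟩, ⟨hj'1, hj'n⟩, hij'⟩⟩) =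
        sT k N (blk m p i') (blk m p j') := rfl
    rw [hug]
    by_cases hip : i' = p
    · subst hip
      exact lie_sT_ET_left (hsub i' hi'1 hi'n) (hsub j' hj'1 hj'n)
        (blk_disjoint hp1 hij') haBp hbBp hab
    · by_cases hjp : j' = p
      · subst hjp
        exact lie_sT_ET_right (hsub i' hi'1 hi'n) (hsub j' hj'1 hj'n)
          (blk_disjoint hp1 hij') haBp hbBp hab
      · exact lie_sT_ET_off (hsub i' hi'1 hi'n) (hsub j' hj'1 hj'n)
          (blk_disjoint hp1 hij') haI hbI
          (Finset.disjoint_right.1 (blk_disjoint hp1 hip) haBp)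
          (Finset.disjoint_right.1 (blk_disjoint hp1 hjp) haBp)
          (Finset.disjoint_right.1 (blk_disjoint hp1 hip) hbBp)
          (Finset.disjoint_right.1 (blk_disjoint hp1 hjp) hbBp) hab
  | Sum.inr (Sum.inl ⟨i', hg⟩) =>
    obtain ⟨hi'1, hi'n⟩ := hg
    have hug : uGen k n m p (Sum.inr (Sum.inl ⟨i', ⟨hi'1, hi'n⟩⟩)) =
        sA k N (blk m p i') := rfl
    rw [hug]
    by_cases hip : i' = p
    · subst hip
      exact lie_sA_ET_mem (hsub i' hi'1 hi'n) haBp hbBp hab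
    · exact lie_sA_ET_off (hsub i' hi'1 hi'n) haI hbI
        (Finset.disjoint_right.1 (blk_disjoint hp1 hip) haBp)
        (Finset.disjoint_right.1 (blk_disjoint hp1 hip) hbBp) hab
  | Sum.inr (Sum.inr ⟨i', hg⟩) =>
    obtain ⟨hi'1, hi'n⟩ := hg
    have hug : uGen k n m p (Sum.inr (Sum.inr ⟨i', ⟨hi'1, hi'n⟩⟩)) =
        sB k N (blk m p i') := rfl
    rw [hug]
    by_cases hip : i' = p
    · subst hip
      exact lie_sB_ET_mem (hsub i' hi'1 hi'n) haBp hbBp hab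
    · exact lie_sB_ET_off (hsub i' hi'1 hi'n) haI hbI
        (Finset.disjoint_right.1 (blk_disjoint hp1 hip) haBp)
        (Finset.disjoint_right.1 (blk_disjoint hp1 hip) hbBp) hab

lemma full_comm {n m p : ℕ} (hn : 1 ≤ n) (hp1 : 1 ≤ p) (hpn : p ≤ n)
    (x : FreeLieAlgebra k (EGen n)) (y : FreeLieAlgebra k (DKGen m)) :
    ⁅u0 k n m p x, v0 k n m p y⁆ = 0 := by
  have step1 : ∀ (g : EGen n), ⁅uGen k n m p g, v0 k n m p y⁆ = 0 := by
    intro g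
    have hy := lift_mem_lieSpan (vGen k n m p) y
    have hle : LieSubalgebra.lieSpan k (Ell k (n + m - 1)) (Set.range (vGen k n m p)) ≤
        centL k (uGen k n m p g) := by
      rw [LieSubalgebra.lieSpan_le]
      rintro _ ⟨h, rfl⟩
      exact mem_centL.2 (gen_comm hn hp1 hpn g h)
    exact mem_centL.1 (hle hy)
  have hx := lift_mem_lieSpan (uGen k n m p) x
  have hle : LieSubalgebra.lieSpan k (Ell k (n + m - 1)) (Set.range (uGen k n m p)) ≤
      centR k (v0 k n m p y) := by
    rw [LieSubalgebra.lieSpan_le]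
    rintro _ ⟨g, rfl⟩
    exact mem_centR.2 (step1 g)
  exact mem_centR.1 (hle hx)

end Stmt18

/-- **Proposition 4.6.** Fix `n ≥ 1`, `m ≥ 0` and `1 ≤ p ≤ n`.  There exist
Lie algebra morphisms `u : 𝔱_n^{ell} → 𝔱_{n+m−1}^{ell}` and `v : 𝔱_m → 𝔱_{n+m−1}^{ell}`
given on generators by the formulas of Proposition 4.6, and their images commute. -/
theorem ell_partial_composition (n m p : ℕ) (hn : 1 ≤ n) (hp1 : 1 ≤ p) (hpn : p ≤ n) :
    ∃ (u : Ell k n →ₗ⁅k⁆ Ell k (n + m - 1)) (v : DK k m →ₗ⁅k⁆ Ell k (n + m - 1)),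
      (∀ i j : ℕ, 1 ≤ i → i ≤ m → 1 ≤ j → j ≤ m → i ≠ j →
        v (T k m i j) = ET k (n + m - 1) (i + p - 1) (j + p - 1)) ∧
      (∀ i j : ℕ, 1 ≤ i → i < j → j ≤ n →
        (p < i → u (ET k n i j) = ET k (n + m - 1) (i + m - 1) (j + m - 1)) ∧
        (p = i → u (ET k n i j) =
          ∑ l ∈ Finset.Icc i (i + m - 1), ET k (n + m - 1) l (j + m - 1)) ∧
        (i < p → p < j → u (ET k n i j) = ET k (n + m - 1) i (j + m - 1)) ∧
        (p = j → u (ET k n i j) =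
          ∑ l ∈ Finset.Icc j (j + m - 1), ET k (n + m - 1) i l) ∧
        (j < p → u (ET k n i j) = ET k (n + m - 1) i j)) ∧
      (∀ i : ℕ, 1 ≤ i → i ≤ n →
        (p < i → u (EA k n i) = EA k (n + m - 1) (i + m - 1)) ∧
        (p = i → u (EA k n i) = ∑ l ∈ Finset.Icc i (i + m - 1), EA k (n + m - 1) l) ∧
        (i < p → u (EA k n i) = EA k (n + m - 1) i)) ∧
      (∀ i : ℕ, 1 ≤ i → i ≤ n →
        (p < i → u (EB k n i) = EB k (n + m - 1) (i + m - 1)) ∧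
        (p = i → u (EB k n i) = ∑ l ∈ Finset.Icc i (i + m - 1), EB k (n + m - 1) l) ∧
        (i < p → u (EB k n i) = EB k (n + m - 1) i)) ∧
      (∀ (a : Ell k n) (b : DK k m), ⁅u a, v b⁆ = 0) := by
  refine ⟨Stmt18.descendE n (Stmt18.u0 k n m p) (Stmt18.u0_rels hn hp1 hpn),
    Stmt18.descendDK m (Stmt18.v0 k n m p) (Stmt18.v0_rels hn hp1 hpn), ?_, ?_, ?_, ?_, ?_⟩
  · intro i j hi1 him hj1 hjm hij
    exact (Stmt18.descendDK_mk m _ _ _).trans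
      (Stmt18.v0_dkOf ⟨⟨hi1, him⟩, ⟨hj1, hjm⟩, hij⟩)
  · intro i j hi1 hij hjn
    have hin : i ≤ n := le_trans (le_of_lt hij) hjn
    have hbase : Stmt18.descendE n (Stmt18.u0 k n m p) (Stmt18.u0_rels hn hp1 hpn)
        (ET k n i j) = Stmt18.sT k (n + m - 1) (Stmt18.blk m p i) (Stmt18.blk m p j) :=
      (Stmt18.descendE_mk n _ _ _).trans
        (Stmt18.u0_eT ⟨⟨hi1, hin⟩, ⟨by omega, hjn⟩, by omega⟩)
    refine ⟨?_, ?_, ?_, ?_, ?_⟩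
    · intro hpi
      rw [hbase, Stmt18.blk_of_gt hpi, Stmt18.blk_of_gt (by omega), Stmt18.sT_singleton]
    · intro hpi
      subst hpi
      rw [hbase, Stmt18.blk_self, Stmt18.blk_of_gt (by omega), Stmt18.sT_singleton_right]
    · intro hip hpj
      rw [hbase, Stmt18.blk_of_lt hip, Stmt18.blk_of_gt hpj, Stmt18.sT_singleton]
    · intro hpj
      subst hpj
      rw [hbase, Stmt18.blk_of_lt hij, Stmt18.blk_self, Stmt18.sT_singleton_left]
    · intro hjp
      rw [hbase, Stmt18.blk_of_lt (by omega), Stmt18.blk_of_lt hjp, Stmt18.sT_singleton]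
  · intro i hi1 hin
    have hbase : Stmt18.descendE n (Stmt18.u0 k n m p) (Stmt18.u0_rels hn hp1 hpn)
        (EA k n i) = Stmt18.sA k (n + m - 1) (Stmt18.blk m p i) :=
      (Stmt18.descendE_mk n _ _ _).trans (Stmt18.u0_eA ⟨hi1, hin⟩)
    refine ⟨?_, ?_, ?_⟩
    · intro hpi
      rw [hbase, Stmt18.blk_of_gt hpi, Stmt18.sA_singleton]
    · intro hpi
      subst hpi
      rw [hbase, Stmt18.blk_self, Stmt18.sA]
    · intro hip
      rw [hbase, Stmt18.blk_of_lt hip, Stmt18.sA_singleton]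
  · intro i hi1 hin
    have hbase : Stmt18.descendE n (Stmt18.u0 k n m p) (Stmt18.u0_rels hn hp1 hpn)
        (EB k n i) = Stmt18.sB k (n + m - 1) (Stmt18.blk m p i) :=
      (Stmt18.descendE_mk n _ _ _).trans (Stmt18.u0_eB ⟨hi1, hin⟩)
    refine ⟨?_, ?_, ?_⟩
    · intro hpi
      rw [hbase, Stmt18.blk_of_gt hpi, Stmt18.sB_singleton]
    · intro hpi
      subst hpi
      rw [hbase, Stmt18.blk_self, Stmt18.sB]
    · intro hip
      rw [hbase, Stmt18.blk_of_lt hip, Stmt18.sB_singleton]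
  · intro a b
    obtain ⟨x, rfl⟩ := LieSubmodule.Quotient.surjective_mk' (EIdeal k n) a
    obtain ⟨y, rfl⟩ := LieSubmodule.Quotient.surjective_mk' (DKIdeal k m) b
    rw [Stmt18.descendE_mk, Stmt18.descendDK_mk]
    exact Stmt18.full_comm hn hp1 hpn x y
end
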